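/- arXiv:2107.01373 — 7 statements merged into one kernel-verified Lean document; each statement's English description precedes it below -/
import Mathlib

section
/- For every n ≥ 1, let H₀ be the 4-block n-fold integer matrix with n+1 block rows built from the row vectors C = (-1,-1,-1), D = (5,3), B = (0,-1,1), A = (3,4): the first row of H₀ is (C, D, D, …, D) (one copy of D per block column 1,…,n) and for 1 ≤ i ≤ n the (i+1)-st row is (B, 0, …, 0, A, 0, …, 0) with A in block column i. Let g = (g⁰, g¹, …, gⁿ) ∈ ℤ^{3+2n} with g⁰ = (1, n-1, n) and gⁱ = (1, -1) for all 1 ≤ i ≤ n. Then H₀ g = 0, g is a Graver basis element of H₀ (i.e., g is a ⊑-minimal element of ker_ℤ(H₀)\{0}), and ‖g‖∞ = n. In particular, there exists a 4-block n-fold matrix with s_B = s_D = 1 some of whose Graver basis elements have ℓ∞-norm Ω(n). -/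
open Matrix

/-- The conformal order `x ⊑ y` on integer vectors: `x` and `y` are sign-compatible
and `|x k| ≤ |y k|` in every coordinate. -/
def Conf {ι : Type*} (x y : ι → ℤ) : Prop :=
  ∀ k, 0 ≤ x k * y k ∧ |x k| ≤ |y k|

/-- The ℓ∞-norm of an integer vector, as a natural number. -/
def linf {ι : Type*} [Fintype ι] (x : ι → ℤ) : ℕ :=
  Finset.univ.sup fun k => (x k).natAbs

/-- `g` is a Graver basis element of the integer matrix `A`, i.e. a `⊑`-minimal
element of `ker_ℤ(A) \ {0}`. -/
def IsGraver {R ι : Type*} [Fintype R] [Fintype ι] (A : Matrix R ι ℤ) (g : ι → ℤ) : Prop :=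
  A.mulVec g = 0 ∧ g ≠ 0 ∧ ∀ y, A.mulVec y = 0 → y ≠ 0 → Conf y g → y = g

/-- The generalized 4-block n-fold matrix built from `C`, the `D i`'s, the `B i`'s and
the `A i`'s. -/
def H4 {n sA tA sD tB : ℕ} (C : Matrix (Fin sD) (Fin tB) ℤ)
    (D : Fin n → Matrix (Fin sD) (Fin tA) ℤ)
    (B : Fin n → Matrix (Fin sA) (Fin tB) ℤ)
    (A : Fin n → Matrix (Fin sA) (Fin tA) ℤ) :
    Matrix (Fin sD ⊕ Fin n × Fin sA) (Fin tB ⊕ Fin n × Fin tA) ℤ :=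
  Matrix.of fun r c =>
    match r, c with
    | Sum.inl r, Sum.inl c => C r c
    | Sum.inl r, Sum.inr ic => D ic.1 r ic.2
    | Sum.inr ir, Sum.inl c => B ir.1 ir.2 c
    | Sum.inr ir, Sum.inr ic => if ir.1 = ic.1 then A ir.1 ir.2 ic.2 else 0

/-- The two-stage stochastic matrix obtained from the generalized 4-block n-fold matrix
by deleting the first block row. -/
def Htwo {n sA tA tB : ℕ}
    (B : Fin n → Matrix (Fin sA) (Fin tB) ℤ)
    (A : Fin n → Matrix (Fin sA) (Fin tA) ℤ) :
    Matrix (Fin n × Fin sA) (Fin tB ⊕ Fin n × Fin tA) ℤ :=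
  Matrix.of fun r c =>
    match c with
    | Sum.inl c => B r.1 r.2 c
    | Sum.inr ic => if r.1 = ic.1 then A r.1 r.2 ic.2 else 0

/-- A vector is tier-0 if `B i x⁰ = 0` for all `i`. -/
def TierZero {n sA tA tB : ℕ} (B : Fin n → Matrix (Fin sA) (Fin tB) ℤ)
    (x : Fin tB ⊕ Fin n × Fin tA → ℤ) : Prop :=
  ∀ i, (B i).mulVec (fun c => x (Sum.inl c)) = 0

/-- A vector is tier-1 (w.r.t. `q`) if `B i x⁰ = q` for all `i`. -/
def TierOne {n sA tA tB : ℕ} (B : Fin n → Matrix (Fin sA) (Fin tB) ℤ)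
    (q : Fin sA → ℤ) (x : Fin tB ⊕ Fin n × Fin tA → ℤ) : Prop :=
  ∀ i, (B i).mulVec (fun c => x (Sum.inl c)) = q

/-- A uniform decomposition of `g`: `g = ∑ η j`, each `η j ⊑ g` lies in the kernel of the
two-stage part, and each `η j` is tier-0 or tier-1 for a fixed `q ≠ 0`. -/
def UniformDecomp {n sA tA tB : ℕ}
    (B : Fin n → Matrix (Fin sA) (Fin tB) ℤ)
    (A : Fin n → Matrix (Fin sA) (Fin tA) ℤ)
    (g : Fin tB ⊕ Fin n × Fin tA → ℤ) {N : ℕ}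
    (η : Fin N → Fin tB ⊕ Fin n × Fin tA → ℤ) (q : Fin sA → ℤ) : Prop :=
  q ≠ 0 ∧ g = ∑ j, η j ∧
    ∀ j, Conf (η j) g ∧ (Htwo B A).mulVec (η j) = 0 ∧
      (TierZero B (η j) ∨ TierOne B q (η j))

/-- A uniform decomposition is ω-balanced if the number of tier-0 summands is at most
ω times the number of tier-1 summands. -/
def BalancedUD {n sA tA tB : ℕ} (ω : ℕ)
    (B : Fin n → Matrix (Fin sA) (Fin tB) ℤ) (q : Fin sA → ℤ)
    {N : ℕ} (η : Fin N → Fin tB ⊕ Fin n × Fin tA → ℤ) : Prop :=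
  Nat.card {j : Fin N // TierZero B (η j)} ≤ ω * Nat.card {j : Fin N // TierOne B q (η j)}

/-- The concrete 4-block n-fold matrix of Theorem 2 (lower bound), with
`C = (-1,-1,-1)`, `D = (5,3)`, `B = (0,-1,1)`, `A = (3,4)`. -/
def H0ex (n : ℕ) : Matrix (Fin 1 ⊕ Fin n × Fin 1) (Fin 3 ⊕ Fin n × Fin 2) ℤ :=
  H4 !![(-1 : ℤ), -1, -1] (fun _ => !![(5 : ℤ), 3]) (fun _ => !![(0 : ℤ), -1, 1])
    (fun _ => !![(3 : ℤ), 4])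

/-- The vector `g` with `g⁰ = (1, n-1, n)` and `gⁱ = (1, -1)` for `1 ≤ i ≤ n`. -/
def gex (n : ℕ) : Fin 3 ⊕ Fin n × Fin 2 → ℤ :=
  Sum.elim ![1, (n : ℤ) - 1, (n : ℤ)] fun p => ![1, -1] p.2

/-!
A kernel element `y ⊑ g` has `y⁰ = (a, b, c)` with `0 ≤ a ≤ 1`, `0 ≤ b ≤ n - 1`, `0 ≤ c ≤ n`,
and bricks `yⁱ = (uᵢ, vᵢ) ∈ {0, 1} × {-1, 0}`. The `i`-th row reads `3uᵢ + 4vᵢ = b - c`, and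
`(u, v) ↦ 3u + 4v` is injective on `{0, 1} × {-1, 0}`, so all bricks equal one `(u, v)`.
The first row then reads `a + b + c = n (5u + 3v)`, where `0 ≤ a + b + c ≤ 2n`: this rules out
`(u, v) = (1, 0)` and `(0, -1)`, gives `y = 0` for `(0, 0)`, and forces `y = g` for `(1, -1)`,
since then `a + b + c` attains its maximum `2n`.
-/

section Conformal

variable {ι : Type*} {x y : ι → ℤ}

theorem Conf.nonneg_and_le (h : Conf x y) {k : ι} (hk : 0 ≤ y k) : 0 ≤ x k ∧ x k ≤ y k := by
  obtain ⟨hmul, habs⟩ := h k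
  rw [abs_of_nonneg hk] at habs
  refine ⟨?_, (abs_le.mp habs).2⟩
  rcases hk.lt_or_eq with hpos | hzero
  · exact nonneg_of_mul_nonneg_left hmul hpos
  · linarith [(abs_le.mp habs).1, hzero]

theorem Conf.le_and_nonpos (h : Conf x y) {k : ι} (hk : y k ≤ 0) : y k ≤ x k ∧ x k ≤ 0 := by
  obtain ⟨hmul, habs⟩ := h k
  rw [abs_of_nonpos hk] at habs
  refine ⟨by linarith [(abs_le.mp habs).1], ?_⟩
  rcases hk.lt_or_eq with hneg | hzero
  · exact nonpos_of_mul_nonneg_left hmul hneg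
  · linarith [(abs_le.mp habs).2, hzero]

end Conformal

section FourBlock

variable {n sA tA sD tB : ℕ} (C : Matrix (Fin sD) (Fin tB) ℤ)
  (D : Fin n → Matrix (Fin sD) (Fin tA) ℤ) (B : Fin n → Matrix (Fin sA) (Fin tB) ℤ)
  (A : Fin n → Matrix (Fin sA) (Fin tA) ℤ) (x : Fin tB ⊕ Fin n × Fin tA → ℤ)

theorem H4_mulVec_inl (r : Fin sD) :
    (H4 C D B A *ᵥ x) (Sum.inl r) =
      (C *ᵥ fun c => x (Sum.inl c)) r + ∑ i, (D i *ᵥ fun k => x (Sum.inr (i, k))) r := by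
  simp [H4, mulVec, dotProduct, Fintype.sum_sum_type, Fintype.sum_prod_type]

theorem H4_mulVec_inr (i : Fin n) (r : Fin sA) :
    (H4 C D B A *ᵥ x) (Sum.inr (i, r)) =
      (B i *ᵥ fun c => x (Sum.inl c)) r + (A i *ᵥ fun k => x (Sum.inr (i, k))) r := by
  simp [H4, mulVec, dotProduct, Fintype.sum_sum_type, Fintype.sum_prod_type, ite_mul]

end FourBlock

section Example

variable {n : ℕ} (y : Fin 3 ⊕ Fin n × Fin 2 → ℤ)

theorem H0ex_mulVec_inl :
    (H0ex n *ᵥ y) (Sum.inl 0) =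
      -y (Sum.inl 0) - y (Sum.inl 1) - y (Sum.inl 2)
        + ∑ i, (5 * y (Sum.inr (i, 0)) + 3 * y (Sum.inr (i, 1))) := by
  rw [H0ex, H4_mulVec_inl]
  simp [mulVec, dotProduct, Fin.sum_univ_three]
  ring

theorem H0ex_mulVec_inr (i : Fin n) :
    (H0ex n *ᵥ y) (Sum.inr (i, 0)) =
      -y (Sum.inl 1) + y (Sum.inl 2) + 3 * y (Sum.inr (i, 0)) + 4 * y (Sum.inr (i, 1)) := by
  rw [H0ex, H4_mulVec_inr]
  simp [mulVec, dotProduct, Fin.sum_univ_three]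
  ring

end Example

theorem H0ex_mulVec_gex (n : ℕ) : H0ex n *ᵥ gex n = 0 := by
  funext r
  rcases r with r | ⟨i, r⟩ <;> fin_cases r
  · simp [H0ex_mulVec_inl, gex]
    ring
  · simp [H0ex_mulVec_inr, gex]

theorem gex_ne_zero (n : ℕ) : gex n ≠ 0 :=
  fun h => by simpa [gex] using congrFun h (Sum.inl 0)

theorem linf_gex {n : ℕ} (hn : 1 ≤ n) : linf (gex n) = n := by
  unfold linf
  apply le_antisymm
  · refine Finset.sup_le ?_
    rintro (k | ⟨i, k⟩) - <;> fin_cases k <;> simp [gex] <;> omega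
  · simpa [gex] using Finset.le_sup (f := fun k => (gex n k).natAbs) (Finset.mem_univ (Sum.inl 2))

section Minimality

variable {n : ℕ} {y : Fin 3 ⊕ Fin n × Fin 2 → ℤ}

theorem Conf.gex_bounds (hn : 1 ≤ n) (hconf : Conf y (gex n)) :
    (0 ≤ y (Sum.inl 0) ∧ y (Sum.inl 0) ≤ 1) ∧ (0 ≤ y (Sum.inl 1) ∧ y (Sum.inl 1) ≤ n - 1) ∧
      (0 ≤ y (Sum.inl 2) ∧ y (Sum.inl 2) ≤ n) ∧
      ∀ i, (0 ≤ y (Sum.inr (i, 0)) ∧ y (Sum.inr (i, 0)) ≤ 1) ∧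
        (-1 ≤ y (Sum.inr (i, 1)) ∧ y (Sum.inr (i, 1)) ≤ 0) := by
  refine ⟨hconf.nonneg_and_le (by simp [gex]), hconf.nonneg_and_le (by simp [gex]; omega),
    hconf.nonneg_and_le (by simp [gex]), fun i => ⟨hconf.nonneg_and_le (by simp [gex]),
    hconf.le_and_nonpos (by simp [gex])⟩⟩

theorem brick_eq_of_conf (hn : 1 ≤ n) (hy : H0ex n *ᵥ y = 0) (hconf : Conf y (gex n))
    (i j : Fin n) : y (Sum.inr (i, 0)) = y (Sum.inr (j, 0)) ∧
      y (Sum.inr (i, 1)) = y (Sum.inr (j, 1)) := by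
  have hi := congrFun hy (Sum.inr (i, 0))
  have hj := congrFun hy (Sum.inr (j, 0))
  rw [H0ex_mulVec_inr, Pi.zero_apply] at hi hj
  obtain ⟨-, -, -, hb⟩ := hconf.gex_bounds hn
  have := hb i
  have := hb j
  omega

theorem eq_zero_or_eq_gex_of_conf (hn : 1 ≤ n) (hy : H0ex n *ᵥ y = 0)
    (hconf : Conf y (gex n)) : y = 0 ∨ y = gex n := by
  obtain ⟨ha, hb, hc, hbrick⟩ := hconf.gex_bounds hn
  let i₀ : Fin n := ⟨0, hn⟩
  have hbricks := fun i => brick_eq_of_conf hn hy hconf i i₀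
  have hsum : y (Sum.inl 0) + y (Sum.inl 1) + y (Sum.inl 2) =
      n * (5 * y (Sum.inr (i₀, 0)) + 3 * y (Sum.inr (i₀, 1))) := by
    have h := congrFun hy (Sum.inl 0)
    rw [H0ex_mulVec_inl, Pi.zero_apply] at h
    simp only [hbricks, Finset.sum_const, Finset.card_univ, Fintype.card_fin, nsmul_eq_mul] at h
    linarith
  have hu : y (Sum.inr (i₀, 0)) = 0 ∨ y (Sum.inr (i₀, 0)) = 1 := by have := hbrick i₀; omega
  have hv : y (Sum.inr (i₀, 1)) = -1 ∨ y (Sum.inr (i₀, 1)) = 0 := by have := hbrick i₀; omega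
  rcases hu with hu | hu <;> rcases hv with hv | hv <;> rw [hu, hv] at hsum hbricks <;>
    norm_num at hsum
  · linarith
  · left
    funext k
    rcases k with k | ⟨i, k⟩ <;> fin_cases k <;> simp [hbricks] <;> omega
  · right
    funext k
    rcases k with k | ⟨i, k⟩ <;> fin_cases k <;> simp [gex, hbricks] <;> omega
  · linarith

end Minimality

/-- `H₀ g = 0`, `g` is a Graver basis element of `H₀`, and `‖g‖∞ = n`. -/
theorem stmt0 (n : ℕ) (hn : 1 ≤ n) :
    (H0ex n).mulVec (gex n) = 0 ∧ IsGraver (H0ex n) (gex n) ∧ linf (gex n) = n :=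
  ⟨H0ex_mulVec_gex n, ⟨H0ex_mulVec_gex n, gex_ne_zero n, fun _ hy hy0 hconf =>
    (eq_zero_or_eq_gex_of_conf hn hy hconf).resolve_left hy0⟩, linf_gex hn⟩
end

section
/- Colorful Steinitz-type lemma: Let d, ζ, μ, α₁, …, α_μ, m̄ be positive integers, set α = Σ_{j=1}^μ α_j and M = α·m̄. Let x₁, …, x_M ∈ ℤ^d be vectors with ‖x_i‖∞ ≤ ζ for every i, each assigned one of μ colors, such that exactly α_j·m̄ of the vectors have color j for each j, and Σ_{i=1}^M x_i = 0. If M > (2dζ + 2μζ + 1)^{d+μ}·α + α + d + μ, then there exist a positive integer m ≤ (2dζ + 2μζ + 1)^{d+μ} and a subset T ⊆ {1,…,M} such that, for every color j, T contains exactly α_j·m indices of color j, and Σ_{i∈T} x_i = 0. -/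
open Matrix

open Finset Module Filter Topology

/-!
Append to each `x i` the vector `e_(color i) - α / ∑ α` of `ℝ^μ`. The lifted vectors sum to
zero and have sup norm at most `ζ`, so by the Steinitz lemma, in Grinberg and Sevastyanov's form
with constant the dimension `d + μ`, they can be ordered so that every prefix sum has sup norm at
most `(d + μ) ζ`. At the prefix lengths `(∑ α) s` the lifted prefix sums are integer vectors
(the `x`-sum, and the colour counts minus `s α`), so among `s = 0, …, K` with
`K = (2 (d + μ) ζ + 1) ^ (d + μ)` two of them coincide; the block between them is `T`.

The Steinitz lemma is proved from the full index set downwards. A set `A` carries weights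
`λ ∈ [0,1]^A` with `∑ λ ≥ |A| - n` and `∑ λᵢ vᵢ = 0`, which bound `‖∑_A v‖ ≤ ∑ (1 - λᵢ) ζ ≤ n ζ`.
A vertex of the polytope cut out by `∑ λ = |A| - n - 1` and `∑ λᵢ vᵢ = 0` has at most `n + 1`
fractional coordinates, hence a zero coordinate, whose index can be removed from `A`.
-/

lemma card_Ioo_le_finrank_of_mem_extremePoints {κ V : Type*} [Fintype κ] [AddCommGroup V]
    [Module ℝ V] [FiniteDimensional ℝ V] (L : (κ → ℝ) →ₗ[ℝ] V) (a b : κ → ℝ) (c : V)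
    {l : κ → ℝ} (hl : l ∈ (Set.Icc a b ∩ L ⁻¹' {c}).extremePoints ℝ) :
    #{i | l i ∈ Set.Ioo (a i) (b i)} ≤ finrank ℝ V := by
  classical
  set F : Finset κ := {i | l i ∈ Set.Ioo (a i) (b i)}
  by_contra! hF
  obtain ⟨δ, hδ, hδ0⟩ : ∃ δ ∈ LinearMap.ker (L.prod (LinearMap.funLeft ℝ ℝ
      (Subtype.val : {i // i ∉ F} → κ))), δ ≠ 0 := by
    refine Submodule.exists_mem_ne_zero_of_ne_bot (LinearMap.ker_ne_bot_of_finrank_lt ?_)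
    rw [finrank_prod, finrank_fintype_fun_eq_card, finrank_fintype_fun_eq_card,
      Fintype.card_subtype_compl, Fintype.card_coe]
    have := F.card_le_univ
    omega
  have hLδ : L δ = 0 := congrArg Prod.fst hδ
  have hδF : ∀ i ∉ F, δ i = 0 := fun i hi => congrFun (congrArg Prod.snd hδ) ⟨i, hi⟩
  have hmove : ∀ᶠ t in 𝓝 (0 : ℝ), l + t • δ ∈ Set.Icc a b ∩ L ⁻¹' {c} := by
    have hbox : ∀ i, ∀ᶠ t in 𝓝 (0 : ℝ), l i + t * δ i ∈ Set.Icc (a i) (b i) := by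
      intro i
      by_cases hi : i ∈ F
      · have hcont : Tendsto (fun t : ℝ => l i + t * δ i) (𝓝 0) (𝓝 (l i)) :=
          (continuous_const.add (continuous_id.mul continuous_const)).tendsto' _ _ (by simp)
        exact (hcont.eventually (Ioo_mem_nhds (mem_filter.1 hi).2.1 (mem_filter.1 hi).2.2)).mono
          fun t ht => Set.Ioo_subset_Icc_self ht
      · simp only [hδF i hi, mul_zero, add_zero]
        exact Eventually.of_forall fun _ => ⟨hl.1.1.1 i, hl.1.1.2 i⟩
    filter_upwards [eventually_all.2 hbox] with t ht
    refine ⟨⟨fun i => (ht i).1, fun i => (ht i).2⟩, ?_⟩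
    simpa [hLδ] using hl.1.2
  have hneg : ∀ᶠ t in 𝓝 (0 : ℝ), l + (-t) • δ ∈ Set.Icc a b ∩ L ⁻¹' {c} :=
    (neg_zero (G := ℝ) ▸ tendsto_neg (0 : ℝ)).eventually hmove
  obtain ⟨t, ⟨htp, htm⟩, ht0⟩ :=
    ((hmove.and hneg).filter_mono nhdsWithin_le_nhds |>.and self_mem_nhdsWithin).exists
      (f := 𝓝[≠] (0 : ℝ))
  have hseg : l ∈ openSegment ℝ (l + (-t) • δ) (l + t • δ) :=
    ⟨1 / 2, 1 / 2, by norm_num, by norm_num, by norm_num, by module⟩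
  exact hδ0 (smul_right_injective _ (neg_ne_zero.2 ht0) (by simpa using hl.2 htm htp hseg))

lemma exists_eq_zero_of_card_Ioo_le {κ : Type*} [Fintype κ] {A : Finset κ} {l : κ → ℝ} {r : ℕ}
    (hr : 0 < r) (hl : ∀ i, l i ∈ Set.Icc 0 1) (hF : #{i | l i ∈ Set.Ioo 0 1} ≤ r)
    (hsum : ∑ i ∈ A, l i ≤ #A - r) : ∃ e ∈ A, l e = 0 := by
  classical
  by_contra! hpos
  set F := A.filter (l · < 1)
  have hFfrac : #F ≤ r := le_trans (card_le_card fun i hi => by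
    simp only [F, mem_filter] at hi
    exact mem_filter.2 ⟨mem_univ i, lt_of_le_of_ne (hl i).1 (hpos i hi.1).symm, hi.2⟩) hF
  have hdeficit : ∑ i ∈ A, (1 - l i) = ∑ i ∈ F, (1 - l i) :=
    (sum_filter_of_ne fun i _ h => lt_of_le_of_ne (hl i).2 (by contrapose! h; simp [h])).symm
  have hr' : (r : ℝ) ≤ ∑ i ∈ F, (1 - l i) := by
    rw [← hdeficit, sum_sub_distrib, sum_const, nsmul_one]; linarith
  rcases F.eq_empty_or_nonempty with hF0 | hFne
  · rw [hF0, sum_empty, Nat.cast_nonpos] at hr'; omega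
  · have : ∑ i ∈ F, (1 - l i) < ∑ i ∈ F, 1 :=
      sum_lt_sum_of_nonempty hFne fun i hi =>
        sub_lt_self 1 ((hl i).1.lt_of_ne (hpos i (mem_filter.1 hi).1).symm)
    rw [sum_const, nsmul_one] at this
    have : (#F : ℝ) ≤ r := by exact_mod_cast hFfrac
    linarith

theorem Finset.exists_chain_of_exists_erase {α : Type*} [DecidableEq α] {P : Finset α → Prop}
    (hP : ∀ A, P A → A.Nonempty → ∃ e ∈ A, P (A.erase e)) (A : Finset α) (hA : P A) :
    ∃ B : ℕ → Finset α, Monotone B ∧ (∀ t ≤ #A, #(B t) = t) ∧ (∀ t, #A ≤ t → B t = A) ∧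
      ∀ t, P (B t) := by
  induction hn : #A generalizing A with
  | zero =>
    obtain rfl := card_eq_zero.1 hn
    exact ⟨fun _ => ∅, monotone_const, fun t ht => by rw [card_empty]; omega, fun _ _ => rfl,
      fun _ => hA⟩
  | succ n ih =>
    obtain ⟨e, he, hPe⟩ := hP A hA (card_pos.1 (by omega))
    obtain ⟨B, hmono, hcard, hend, hPB⟩ :=
      ih (A.erase e) hPe (by rw [card_erase_of_mem he, hn]; rfl)
    refine ⟨fun t => if t ≤ n then B t else A, monotone_nat_of_le_succ fun t => ?_,
      fun t ht => ?_, fun t ht => if_neg (by omega), fun t => ?_⟩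
    · by_cases ht : t + 1 ≤ n
      · simpa [ht, show t ≤ n by omega] using hmono t.le_succ
      · by_cases ht' : t ≤ n
        · simpa [ht, ht', hend t (by omega)] using erase_subset e A
        · simp [ht, ht']
    · dsimp only
      split_ifs with h
      · exact hcard t h
      · omega
    · dsimp only
      split_ifs
      exacts [hPB t, hA]

section Steinitz

variable {κ E : Type*} [NormedAddCommGroup E] [NormedSpace ℝ E]

def HasFractionalBalance (v : κ → E) (A : Finset κ) : Prop :=
  ∃ l : κ → ℝ, (∀ i, l i ∈ Set.Icc 0 1) ∧ (#A : ℝ) - finrank ℝ E ≤ ∑ i ∈ A, l i ∧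
    ∑ i ∈ A, l i • v i = 0

variable {v : κ → E}

lemma hasFractionalBalance_univ [Fintype κ] (hv : ∑ i, v i = 0) : HasFractionalBalance v univ :=
  ⟨1, fun _ => by simp, by simp, by simpa using hv⟩

lemma hasFractionalBalance_of_card_le {A : Finset κ} (hA : #A ≤ finrank ℝ E) :
    HasFractionalBalance v A :=
  ⟨0, fun _ => by simp, by simpa using (Nat.cast_le (α := ℝ)).2 hA, by simp⟩

lemma HasFractionalBalance.norm_sum_le {A : Finset κ} {ζ : ℝ} (hA : HasFractionalBalance v A)
    (hζ : 0 ≤ ζ) (hv : ∀ i, ‖v i‖ ≤ ζ) : ‖∑ i ∈ A, v i‖ ≤ finrank ℝ E * ζ := by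
  obtain ⟨l, hl, hsum, hbal⟩ := hA
  have hcompl : ∀ i, 0 ≤ 1 - l i := fun i => sub_nonneg.2 (hl i).2
  calc ‖∑ i ∈ A, v i‖ = ‖∑ i ∈ A, (1 - l i) • v i‖ := by
        simp only [sub_smul, one_smul, sum_sub_distrib, hbal, sub_zero]
    _ ≤ ∑ i ∈ A, (1 - l i) * ζ := norm_sum_le_of_le _ fun i _ => by
        rw [norm_smul, Real.norm_of_nonneg (hcompl i)]
        exact mul_le_mul_of_nonneg_left (hv i) (hcompl i)
    _ = (#A - ∑ i ∈ A, l i) * ζ := by rw [← sum_mul, sum_sub_distrib, sum_const, nsmul_one]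
    _ ≤ finrank ℝ E * ζ := by gcongr; linarith

lemma HasFractionalBalance.exists_erase_of_finrank_lt [Fintype κ] [DecidableEq κ]
    [FiniteDimensional ℝ E] {A : Finset κ} (hA : HasFractionalBalance v A)
    (hlt : finrank ℝ E < #A) : ∃ e ∈ A, HasFractionalBalance v (A.erase e) := by
  obtain ⟨l₀, hl₀, hsum₀, hbal₀⟩ := hA
  set n := finrank ℝ E
  set c : ℝ := #A - 1 - n
  have hc0 : 0 ≤ c := by
    have : (n : ℝ) + 1 ≤ #A := by exact_mod_cast hlt
    linarith
  let L : (κ → ℝ) →ₗ[ℝ] ℝ × E :=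
    (∑ i ∈ A, LinearMap.proj i).prod (∑ i ∈ A, (LinearMap.proj i).smulRight (v i))
  have hL : ∀ l, L l = (∑ i ∈ A, l i, ∑ i ∈ A, l i • v i) := fun l => by simp [L]
  have hS : (Set.Icc 0 1 ∩ L ⁻¹' {(c, 0)}).Nonempty := by
    have hpos : 0 < ∑ i ∈ A, l₀ i := by linarith
    refine ⟨(c / ∑ i ∈ A, l₀ i) • l₀, ⟨?_, ?_⟩, ?_⟩
    · exact fun i => mul_nonneg (div_nonneg hc0 hpos.le) (hl₀ i).1
    · exact fun i => mul_le_one₀ (div_le_one_of_le₀ (by linarith) hpos.le) (hl₀ i).1 (hl₀ i).2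
    · simp_rw [Set.mem_preimage, hL, Pi.smul_apply, smul_eq_mul, ← mul_sum, mul_smul, ← smul_sum,
        hbal₀, smul_zero, div_mul_cancel₀ _ hpos.ne']
      rfl
  obtain ⟨l, hl⟩ := (isCompact_Icc.inter_right
    (isClosed_singleton.preimage L.continuous_of_finiteDimensional)).extremePoints_nonempty hS
  have hfrac := card_Ioo_le_finrank_of_mem_extremePoints L 0 1 (c, 0) hl
  rw [finrank_prod, finrank_self, add_comm] at hfrac
  obtain ⟨⟨hl0, hl1⟩, hLl⟩ := hl.1
  simp only [Set.mem_preimage, Set.mem_singleton_iff, hL, Prod.mk.injEq] at hLl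
  obtain ⟨e, heA, hle⟩ := exists_eq_zero_of_card_Ioo_le n.succ_pos (fun i => ⟨hl0 i, hl1 i⟩)
    hfrac (by rw [hLl.1]; push_cast; linarith)
  refine ⟨e, heA, l, fun i => ⟨hl0 i, hl1 i⟩, ?_, ?_⟩
  · rw [sum_erase _ hle, hLl.1, card_erase_of_mem heA, Nat.cast_pred (card_pos.2 ⟨e, heA⟩)]
  · rw [sum_erase _ (by simp [hle]), hLl.2]

lemma HasFractionalBalance.exists_erase [Fintype κ] [DecidableEq κ] [FiniteDimensional ℝ E]
    {A : Finset κ} (hA : HasFractionalBalance v A) (hne : A.Nonempty) :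
    ∃ e ∈ A, HasFractionalBalance v (A.erase e) := by
  by_cases hlt : finrank ℝ E < #A
  · exact hA.exists_erase_of_finrank_lt hlt
  · obtain ⟨e, he⟩ := hne
    exact ⟨e, he, hasFractionalBalance_of_card_le ((card_erase_le).trans (not_lt.1 hlt))⟩

end Steinitz

theorem exists_steinitz_chain {κ E : Type*} [Fintype κ] [NormedAddCommGroup E] [NormedSpace ℝ E]
    [FiniteDimensional ℝ E] {v : κ → E} {ζ : ℝ} (hζ : 0 ≤ ζ) (hv : ∀ i, ‖v i‖ ≤ ζ)
    (hsum : ∑ i, v i = 0) :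
    ∃ B : ℕ → Finset κ, Monotone B ∧ (∀ t ≤ Fintype.card κ, #(B t) = t) ∧
      ∀ t, ‖∑ i ∈ B t, v i‖ ≤ finrank ℝ E * ζ := by
  classical
  obtain ⟨B, hmono, hcard, -, hbal⟩ := Finset.exists_chain_of_exists_erase
    (fun _ hA hne => hA.exists_erase hne) univ (hasFractionalBalance_univ hsum)
  exact ⟨B, hmono, by simpa using hcard, fun t => (hbal t).norm_sum_le hζ hv⟩

theorem exists_lt_eq_of_abs_le {ι : Type*} [Fintype ι] {G : ℕ → ι → ℤ} {R : ℕ}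
    (hG : ∀ s ≤ (2 * R + 1) ^ Fintype.card ι, ∀ k, |G s k| ≤ R) :
    ∃ s₁ s₂, s₁ < s₂ ∧ s₂ ≤ (2 * R + 1) ^ Fintype.card ι ∧ G s₁ = G s₂ := by
  classical
  have hcard : #(Fintype.piFinset fun _ : ι => Icc (-R : ℤ) R) <
      #(range ((2 * R + 1) ^ Fintype.card ι + 1)) := by
    rw [Fintype.card_piFinset, prod_const, Int.card_Icc, card_range, card_univ,
      show (R + 1 - -R : ℤ).toNat = 2 * R + 1 by omega]
    omega
  obtain ⟨s, hs, s', hs', hne, heq⟩ := exists_ne_map_eq_of_card_lt_of_maps_to hcard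
    (f := G) fun s hs => Fintype.mem_piFinset.2 fun k => mem_Icc.2 (abs_le.1 (hG s
      (Nat.lt_succ_iff.1 (mem_range.1 hs)) k))
  rw [mem_range] at hs hs'
  rcases hne.lt_or_gt with h | h
  exacts [⟨s, s', h, by omega, heq⟩, ⟨s', s, h, by omega, heq.symm⟩]

section Colorful

variable {κ ι C : Type*} [DecidableEq C] (x : κ → ι → ℤ) (color : κ → C) (α : C → ℕ)

noncomputable def colorfulLift [Fintype C] (i : κ) : ι ⊕ C → ℝ :=
  Sum.elim (fun k => x i k) fun j => (if color i = j then 1 else 0) - α j / ∑ j, α j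

def colorProfile (B : Finset κ) (s : ℕ) : ι ⊕ C → ℤ :=
  Sum.elim (∑ i ∈ B, x i) fun j => #{i ∈ B | color i = j} - s * α j

variable {x color α}

lemma norm_colorfulLift_le [Fintype C] [Fintype ι] {ζ : ℕ} (hζ : 1 ≤ ζ)
    (hx : ∀ i k, |x i k| ≤ ζ) (i : κ) : ‖colorfulLift x color α i‖ ≤ ζ := by
  refine (pi_norm_le_iff_of_nonneg (by positivity)).2 fun k => ?_
  rcases k with k | j
  · simpa [colorfulLift] using (Int.cast_le (R := ℝ)).2 (hx i k)
  · have h0 : 0 ≤ (α j : ℝ) / ∑ j, α j := by positivity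
    have h1 : (α j : ℝ) / ∑ j, α j ≤ 1 := div_le_one_of_le₀
      (by exact_mod_cast single_le_sum (fun j _ => (α j).zero_le) (mem_univ j)) (by positivity)
    have hζ' : (1 : ℝ) ≤ ζ := by exact_mod_cast hζ
    simp only [colorfulLift, Sum.elim_inr, Real.norm_eq_abs, abs_le]
    split_ifs <;> constructor <;> linarith

lemma colorProfile_cast [Fintype C] {B : Finset κ} {s : ℕ} (hα : ∑ j, α j ≠ 0)
    (hB : #B = (∑ j, α j) * s) :
    (fun k => (colorProfile x color α B s k : ℝ)) = ∑ i ∈ B, colorfulLift x color α i := by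
  ext (k | j)
  · simp [colorProfile, colorfulLift]
  · simp only [colorProfile, colorfulLift, Sum.elim_inr, Finset.sum_apply, sum_sub_distrib,
      sum_boole, sum_const, nsmul_eq_mul, hB]
    have : (∑ j, (α j : ℝ)) ≠ 0 := by exact_mod_cast hα
    push_cast
    field_simp

lemma abs_colorProfile_le [Fintype C] [Fintype ι] {B : Finset κ} {s R : ℕ} (hα : ∑ j, α j ≠ 0)
    (hB : #B = (∑ j, α j) * s) (hR : ‖∑ i ∈ B, colorfulLift x color α i‖ ≤ R) (k : ι ⊕ C) :
    |colorProfile x color α B s k| ≤ R := by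
  have : |(colorProfile x color α B s k : ℝ)| ≤ R := by
    rw [congrFun (colorProfile_cast hα hB) k]
    exact (norm_le_pi_norm _ k).trans hR
  exact_mod_cast this

lemma colorProfile_sdiff [DecidableEq κ] {B₁ B₂ : Finset κ} {s₁ s₂ : ℕ} (hB : B₁ ⊆ B₂)
    (hs : s₁ ≤ s₂) (h : colorProfile x color α B₁ s₁ = colorProfile x color α B₂ s₂) :
    (∀ j, #{i ∈ B₂ \ B₁ | color i = j} = α j * (s₂ - s₁)) ∧ ∑ i ∈ B₂ \ B₁, x i = 0 := by
  have hx : ∑ i ∈ B₁, x i = ∑ i ∈ B₂, x i := funext fun k => congrFun h (.inl k)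
  refine ⟨fun j => ?_, by rw [sum_sdiff_eq_sub hB, hx, sub_self]⟩
  have hj := congrFun h (.inr j)
  simp only [colorProfile, Sum.elim_inr] at hj
  have hsub : {i ∈ B₁ | color i = j} ⊆ {i ∈ B₂ | color i = j} := filter_subset_filter _ hB
  have hsdiff : {i ∈ B₂ \ B₁ | color i = j} = {i ∈ B₂ | color i = j} \ {i ∈ B₁ | color i = j} := by
    ext; simp only [Finset.mem_filter, Finset.mem_sdiff]; tauto
  rw [hsdiff, card_sdiff_of_subset hsub]
  have := card_le_card hsub
  zify [this, hs] at hj ⊢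
  linarith

end Colorful

theorem stmt5_general (d ζ μ mbar M : ℕ) (hζ : 0 < ζ)
    (α : Fin μ → ℕ)
    (hM : M = (∑ j, α j) * mbar)
    (x : Fin M → Fin d → ℤ) (color : Fin M → Fin μ)
    (hx : ∀ i k, |x i k| ≤ (ζ : ℤ))
    (hcolor : ∀ j, (Finset.univ.filter fun i => color i = j).card = α j * mbar)
    (hsum : ∑ i, x i = 0)
    (hbig : (2 * d * ζ + 2 * μ * ζ + 1) ^ (d + μ) * (∑ j, α j) + (∑ j, α j) + d + μ < M) :
    ∃ m : ℕ, 0 < m ∧ m ≤ (2 * d * ζ + 2 * μ * ζ + 1) ^ (d + μ) ∧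
      ∃ T : Finset (Fin M),
        (∀ j, (T.filter fun i => color i = j).card = α j * m) ∧
        ∑ i ∈ T, x i = 0 := by
  classical
  set a := ∑ j, α j
  set K := (2 * d * ζ + 2 * μ * ζ + 1) ^ (d + μ)
  have ha : a ≠ 0 := by rintro h; simp [h] at hM; omega
  have haK : a * K ≤ M := by linarith [mul_comm a K]
  have hK : K = (2 * ((d + μ) * ζ) + 1) ^ Fintype.card (Fin d ⊕ Fin μ) := by
    simp only [K, Fintype.card_sum, Fintype.card_fin]; ring
  have hlift : ∑ i, colorfulLift x color α i = 0 := by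
    rw [← colorProfile_cast (B := univ) (s := mbar) ha (by rw [card_univ, Fintype.card_fin, hM])]
    ext (k | j) <;> simp [colorProfile, hsum, hcolor, mul_comm]
  obtain ⟨B, hmono, hcard, hnorm⟩ :=
    exists_steinitz_chain (Nat.cast_nonneg ζ) (norm_colorfulLift_le hζ hx) hlift
  obtain ⟨s₁, s₂, hlt, hs₂, heq⟩ := exists_lt_eq_of_abs_le (R := (d + μ) * ζ)
    (G := fun s => colorProfile x color α (B (a * s)) s) fun s hs k =>
      abs_colorProfile_le ha (hcard _ (by simpa using (Nat.mul_le_mul_left a (hK ▸ hs)).trans haK))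
        (by simpa using hnorm (a * s)) k
  obtain ⟨hcount, hzero⟩ := colorProfile_sdiff (hmono (Nat.mul_le_mul_left a hlt.le)) hlt.le heq
  exact ⟨s₂ - s₁, by omega, by omega, _, hcount, hzero⟩

/-- the colorful Steinitz-type lemma. -/
theorem stmt5 (d ζ μ mbar M : ℕ) (hd : 0 < d) (hζ : 0 < ζ) (hμ : 0 < μ) (hmbar : 0 < mbar)
    (α : Fin μ → ℕ) (hα : ∀ j, 0 < α j)
    (hM : M = (∑ j, α j) * mbar)
    (x : Fin M → Fin d → ℤ) (color : Fin M → Fin μ)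
    (hx : ∀ i k, |x i k| ≤ (ζ : ℤ))
    (hcolor : ∀ j, (Finset.univ.filter fun i => color i = j).card = α j * mbar)
    (hsum : ∑ i, x i = 0)
    (hbig : (2 * d * ζ + 2 * μ * ζ + 1) ^ (d + μ) * (∑ j, α j) + (∑ j, α j) + d + μ < M) :
    ∃ m : ℕ, 0 < m ∧ m ≤ (2 * d * ζ + 2 * μ * ζ + 1) ^ (d + μ) ∧
      ∃ T : Finset (Fin M),
        (∀ j, (T.filter fun i => color i = j).card = α j * m) ∧
        ∑ i ∈ T, x i = 0 :=
  stmt5_general d ζ μ mbar M hζ α hM x color hx hcolor hsum hbig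
end

section
/- Let ζ, m be positive integers and let x₁, x₂, …, x_m ∈ ℤ_{>0} satisfy x_i ≤ ζ for every i ∈ {1,…,m} and Σ_{i=1}^m x_i = x. If x is a multiple of (ζ+1)!, then {1,…,m} can be partitioned into m' = x/(ζ+1)! subsets T₁, …, T_{m'} such that Σ_{i∈T_k} x_i = (ζ+1)! for every k ∈ {1,…,m'}. -/
open Matrix

/-! Items of size at most `v` always contain a sub-collection of total `R`, for any `R`
divisible by `v!` that falls short of the whole total by at least `(v+1)! - 1`: blocks of
`(v-1)!` items of the maximal size `v` sum to `v!`, so use as many such blocks as are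
available and needed, and find the remainder, a multiple of `v!` and hence of `(v-1)!`,
among the smaller items by induction on `v`. Peeling off sub-collections of total `(ζ+1)!`
one at a time then yields the partition. -/

open Finset Function
open scoped Nat

section SubsetSum

variable {ι : Type*} {x : ι → ℕ}

theorem Finset.exists_subset_sum_eq_mul_of_forall_eq {s : Finset ι} {a n : ℕ}
    (hx : ∀ i ∈ s, x i = a) (hn : n ≤ #s) : ∃ u ⊆ s, ∑ i ∈ u, x i = n * a := by
  obtain ⟨u, hus, rfl⟩ := exists_subset_card_eq hn
  exact ⟨u, hus, sum_const_nat fun i hi => hx i (hus hi)⟩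

theorem Finset.exists_subset_sum_eq_of_le_factorial [DecidableEq ι] (v : ℕ) {s : Finset ι}
    (hx : ∀ i ∈ s, x i ≤ v) {R : ℕ} (hR : v ! ∣ R) (hle : R + (v + 1)! ≤ ∑ i ∈ s, x i + 1) :
    ∃ t ⊆ s, ∑ i ∈ t, x i = R := by
  induction v generalizing s R with
  | zero =>
    have hsum : ∑ i ∈ s, x i = 0 := sum_eq_zero fun i hi => Nat.le_zero.1 (hx i hi)
    have hR0 : R = 0 := by simp only [hsum, zero_add, Nat.factorial_one] at hle; omega
    exact ⟨∅, empty_subset s, by simp [hR0]⟩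
  | succ v ih =>
    obtain ⟨q, rfl⟩ := hR
    set big := s.filter (x · = v + 1)
    set small := s.filter (x · ≠ v + 1)
    have hbig : ∀ i ∈ big, x i = v + 1 := fun i hi => (mem_filter.1 hi).2
    have hsplit : ∑ i ∈ s, x i = #big * (v + 1) + ∑ i ∈ small, x i := by
      rw [← sum_filter_add_sum_filter_not s (x · = v + 1), sum_const_nat hbig]
    have hfac : (v + 1)! = v ! * (v + 1) := by rw [Nat.factorial_succ, mul_comm]
    by_cases hq : q * v ! ≤ #big
    · obtain ⟨u, hu, husum⟩ := exists_subset_sum_eq_mul_of_forall_eq hbig hq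
      exact ⟨u, hu.trans (filter_subset _ _), by rw [husum, hfac]; ring⟩
    set p := #big / (v !)
    have hp : p * v ! ≤ #big := Nat.div_mul_le_self _ _
    have hbig_lt : #big < v ! * (p + 1) := Nat.lt_mul_div_succ _ (Nat.factorial_pos v)
    have hpq : p < q := by
      by_contra! h
      exact hq ((Nat.mul_le_mul_right _ h).trans hp)
    obtain ⟨r, rfl⟩ := Nat.exists_eq_add_of_le hpq.le
    obtain ⟨u, hu, husum⟩ := exists_subset_sum_eq_mul_of_forall_eq hbig hp
    have hsmall : ∀ i ∈ small, x i ≤ v := fun i hi =>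
      Nat.le_of_lt_succ ((hx i (mem_filter.1 hi).1).lt_of_ne (mem_filter.1 hi).2)
    have hdvd : v ! ∣ (v + 1)! * r := (Nat.factorial_dvd_factorial (Nat.le_succ v)).mul_right _
    have hle' : (v + 1)! * r + (v + 1)! ≤ ∑ i ∈ small, x i + 1 := by
      have h2 : (v + 1 + 1)! = (v + 2) * (v ! * (v + 1)) := by
        rw [Nat.factorial_succ (v + 1), hfac]
      rw [hsplit, hfac, h2] at hle
      rw [hfac]
      nlinarith
    obtain ⟨t, hts, htsum⟩ := ih hsmall hdvd hle'
    have hdisj : Disjoint u t := (disjoint_filter_filter_not s s (x · = v + 1)).mono hu hts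
    refine ⟨u ∪ t, union_subset (hu.trans (filter_subset _ _)) (hts.trans (filter_subset _ _)), ?_⟩
    rw [sum_union hdisj, husum, htsum, hfac]
    ring

theorem Finset.exists_partition_sum_eq [DecidableEq ι] {v G : ℕ} (hG : v ! ∣ G)
    (hGv : (v + 1)! ≤ G + 1) (k : ℕ) {s : Finset ι} (hx : ∀ i ∈ s, 0 < x i ∧ x i ≤ v)
    (hsum : ∑ i ∈ s, x i = k * G) :
    ∃ T : Fin k → Finset ι, Pairwise (Disjoint on T) ∧ (∀ j, T j ⊆ s) ∧
      (∀ i ∈ s, ∃ j, i ∈ T j) ∧ ∀ j, ∑ i ∈ T j, x i = G := by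
  induction k generalizing s with
  | zero =>
    have hs : s = ∅ := eq_empty_of_forall_notMem fun i hi =>
      (hx i hi).1.ne' (sum_eq_zero_iff.1 (by simpa using hsum) i hi)
    exact ⟨Fin.elim0, fun i => i.elim0, fun i => i.elim0, by simp [hs], fun i => i.elim0⟩
  | succ k ih =>
    obtain ⟨t, hts, htsum⟩ : ∃ t ⊆ s, ∑ i ∈ t, x i = G := by
      rcases k.eq_zero_or_pos with rfl | hk
      · exact ⟨s, Subset.rfl, by simpa using hsum⟩
      · refine exists_subset_sum_eq_of_le_factorial v (fun i hi => (hx i hi).2) hG ?_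
        rw [hsum, add_one_mul]
        nlinarith
    have hrest : ∑ i ∈ s \ t, x i = k * G := by
      have := sum_sdiff (f := x) hts
      rw [hsum, htsum, add_one_mul] at this
      omega
    obtain ⟨T, hdisj, hsub, hcover, hT⟩ := ih (fun i hi => hx i (sdiff_subset hi)) hrest
    have ht_disj : ∀ j, Disjoint t (T j) := fun j => disjoint_sdiff.mono_right (hsub j)
    refine ⟨Fin.cons t T, pairwise_fin_succ_iff.2 ⟨fun j => (ht_disj j).symm, ht_disj, hdisj⟩,
      Fin.cases hts fun j => (hsub j).trans sdiff_subset, fun i hi => ?_, Fin.cases htsum hT⟩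
    by_cases hit : i ∈ t
    · exact ⟨0, hit⟩
    · obtain ⟨j, hj⟩ := hcover i (mem_sdiff.2 ⟨hi, hit⟩)
      exact ⟨j.succ, hj⟩

end SubsetSum

theorem stmt6_general (ζ m : ℕ)
    (x : Fin m → ℕ) (hpos : ∀ i, 0 < x i) (hub : ∀ i, x i ≤ ζ)
    (hdvd : Nat.factorial (ζ + 1) ∣ ∑ i, x i) :
    ∃ T : Fin ((∑ i, x i) / Nat.factorial (ζ + 1)) → Finset (Fin m),
      (∀ k l, k ≠ l → Disjoint (T k) (T l)) ∧
      (∀ i, ∃ k, i ∈ T k) ∧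
      (∀ k, ∑ i ∈ T k, x i = Nat.factorial (ζ + 1)) := by
  obtain ⟨T, hdisj, -, hcover, hT⟩ :=
    exists_partition_sum_eq (Nat.factorial_dvd_factorial ζ.le_succ) (Nat.le_succ _) _
      (fun i _ => ⟨hpos i, hub i⟩) (Nat.div_mul_cancel hdvd).symm
  exact ⟨T, hdisj, fun i => hcover i (mem_univ i), hT⟩

/-- positive integers `x₁,…,x_m ≤ ζ` whose sum is a multiple of `(ζ+1)!`
can be partitioned into `(∑ x_i)/(ζ+1)!` subsets each summing to `(ζ+1)!`. -/
theorem stmt6 (ζ m : ℕ) (hζ : 0 < ζ) (hm : 0 < m)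
    (x : Fin m → ℕ) (hpos : ∀ i, 0 < x i) (hub : ∀ i, x i ≤ ζ)
    (hdvd : Nat.factorial (ζ + 1) ∣ ∑ i, x i) :
    ∃ T : Fin ((∑ i, x i) / Nat.factorial (ζ + 1)) → Finset (Fin m),
      (∀ k l, k ≠ l → Disjoint (T k) (T l)) ∧
      (∀ i, ∃ k, i ∈ T k) ∧
      (∀ k, ∑ i ∈ T k, x i = Nat.factorial (ζ + 1)) :=
  stmt6_general ζ m x hpos hub hdvd
end

section
/- Let ζ ∈ ℤ_{>0} and let x₁, x₂, …, x_m ∈ ℤ with |x_i| ≤ ζ for every i ∈ {1,…,m} and Σ_{i=1}^m x_i = x. If x is a multiple of (6ζ² + 2ζ + 1)!, then {1,…,m} can be partitioned into m' subsets T₁, …, T_{m'} such that for every k ∈ {1,…,m'}: |T_k| ≤ (6ζ² + 2ζ + 1)!·(6ζ + 2) (which is 2^{O(ζ² log ζ)}), and Σ_{i∈T_k} x_i ∈ {0, sgn(x)·(6ζ² + 2ζ + 1)!}, where sgn(x) = 1 if x > 0, sgn(x) = -1 if x < 0, and sgn(x) = 0 if x = 0. -/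
open Matrix

/-!
Blocks are peeled off one at a time. If the current sum is zero, either some value `a > 0` and
some value `-c < 0` both occur at least `ζ` times, and then `c` copies of `a` with `a` copies
of `-c` form a zero-sum block of size at most `2ζ`, or all positive (or all negative) values
occur fewer than `ζ` times, so the entries of one sign sum to at most `ζ³` and the whole set
has size at most `2ζ³`. If the sum is a positive multiple of `F = (6ζ²+2ζ+1)!`, either the
positive entries sum to at least `F + ζ·ζ!`, and since `ζ! ∣ F` some of them sum to exactly
`F`, or the sum is below `2F`, hence equal to `F`, and the nonzero entries form one block of
size below `3F`.
-/

open Finset Nat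

namespace Finpartition

variable {ι : Type*} [DecidableEq ι]

theorem exists_forall_mem_parts_of_peel (I p : Finset ι → Prop)
    (step : ∀ s, I s → s.Nonempty → ∃ b ⊆ s, b.Nonempty ∧ p b ∧ I (s \ b))
    (s : Finset ι) (hs : I s) : ∃ P : Finpartition s, ∀ b ∈ P.parts, p b := by
  induction s using Finset.strongInduction with
  | H s ih =>
    obtain rfl | hne := s.eq_empty_or_nonempty
    · exact ⟨Finpartition.empty _, by simp⟩
    obtain ⟨b, hbs, hb, hpb, hI⟩ := step s hs hne
    obtain ⟨P, hP⟩ := ih (s \ b) (sdiff_ssubset hbs hb) hI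
    exact ⟨P.extend hb.ne_empty sdiff_disjoint (sdiff_union_of_subset hbs),
      by simpa [hpb] using hP⟩

theorem exists_fin_enum {s : Finset ι} (P : Finpartition s) :
    ∃ (m : ℕ) (T : Fin m → Finset ι), (∀ k l, k ≠ l → Disjoint (T k) (T l)) ∧
      (∀ i ∈ s, ∃ k, i ∈ T k) ∧ ∀ k, T k ∈ P.parts := by
  refine ⟨#P.parts, fun k => P.parts.equivFin.symm k, fun k l hkl => ?_, fun i hi => ?_,
    fun k => (P.parts.equivFin.symm k).2⟩
  · exact P.disjoint (P.parts.equivFin.symm k).2 (P.parts.equivFin.symm l).2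
      fun h => hkl (P.parts.equivFin.symm.injective (Subtype.ext h))
  · obtain ⟨t, ht, hit⟩ := P.exists_mem hi
    exact ⟨P.parts.equivFin ⟨t, ht⟩, by simpa using hit⟩

end Finpartition

section

variable {ι : Type*} (x : ι → ℤ)

theorem card_le_sum_abs {s : Finset ι} (hs : ∀ i ∈ s, x i ≠ 0) :
    (#s : ℤ) ≤ ∑ i ∈ s, |x i| := by
  simpa using card_nsmul_le_sum s (fun i => |x i|) 1 fun i hi => Int.one_le_abs (hs i hi)

theorem sum_abs_eq_two_mul_sum_filter_pos_sub (s : Finset ι) :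
    ∑ i ∈ s, |x i| = 2 * ∑ i ∈ s with 0 < x i, x i - ∑ i ∈ s, x i := by
  rw [← sum_filter_add_sum_filter_not s (0 < x ·) x,
    ← sum_filter_add_sum_filter_not s (0 < x ·) (|x ·|),
    sum_congr rfl fun i hi => abs_of_pos (mem_filter.1 hi).2,
    sum_congr rfl fun i hi => abs_of_nonpos (not_lt.1 (mem_filter.1 hi).2), sum_neg_distrib]
  ring

theorem exists_subset_card_eq_sum_eq_mul {u : Finset ι} {c : ℤ} {k : ℕ}
    (hk : k ≤ #{i ∈ u | x i = c}) :
    ∃ K ⊆ {i ∈ u | x i = c}, #K = k ∧ ∑ i ∈ K, x i = k * c := by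
  obtain ⟨K, hK, rfl⟩ := exists_subset_card_eq hk
  refine ⟨K, hK, rfl, ?_⟩
  rw [sum_congr rfl fun i hi => (mem_filter.1 (hK hi)).2, sum_const, nsmul_eq_mul]

theorem sum_filter_pos_le_pow_three {ζ : ℕ} {s : Finset ι} (hx : ∀ i ∈ s, x i ≤ ζ)
    (hfib : ∀ a : ℤ, 0 < a → #{i ∈ s | x i = a} ≤ ζ) :
    ∑ i ∈ s with 0 < x i, x i ≤ ζ ^ 3 := by
  rw [← sum_fiberwise_of_maps_to (g := x) (t := Icc 1 (ζ : ℤ)) fun i hi => by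
    obtain ⟨his, hpos⟩ := mem_filter.1 hi
    exact mem_Icc.2 ⟨hpos, hx i his⟩]
  calc _ ≤ ∑ _a ∈ Icc 1 (ζ : ℤ), (ζ * ζ : ℤ) := sum_le_sum fun a ha => ?_
    _ = ζ ^ 3 := by simp; ring
  obtain ⟨ha1, haζ⟩ := mem_Icc.1 ha
  have hcard : #{i ∈ {i ∈ s | 0 < x i} | x i = a} ≤ ζ :=
    (card_le_card (filter_subset_filter _ (filter_subset _ _))).trans (hfib a ha1)
  rw [sum_congr rfl fun i hi => (mem_filter.1 hi).2, sum_const, nsmul_eq_mul]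
  exact mul_le_mul (by exact_mod_cast hcard) haζ (by omega) (by positivity)

theorem card_le_two_mul_pow_three_of_sum_eq_zero {ζ : ℕ} {s : Finset ι}
    (hx : ∀ i ∈ s, x i ≤ ζ) (hnz : ∀ i ∈ s, x i ≠ 0) (hs : ∑ i ∈ s, x i = 0)
    (hfib : ∀ a : ℤ, 0 < a → #{i ∈ s | x i = a} ≤ ζ) : #s ≤ 2 * ζ ^ 3 := by
  have hcard := card_le_sum_abs x hnz
  rw [sum_abs_eq_two_mul_sum_filter_pos_sub, hs] at hcard
  have hpos := sum_filter_pos_le_pow_three x hx hfib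
  have : (#s : ℤ) ≤ (2 * ζ ^ 3 : ℕ) := by push_cast; linarith
  exact_mod_cast this

variable [DecidableEq ι]

theorem exists_subset_sum_eq_of_factorial_dvd (v : ℕ) :
    ∀ {u : Finset ι} {t : ℕ}, (∀ i ∈ u, 0 < x i ∧ x i ≤ v) → v ! ∣ t →
      (t + v * v ! : ℤ) ≤ ∑ i ∈ u, x i → ∃ T ⊆ u, ∑ i ∈ T, x i = t := by
  induction v with
  | zero =>
    intro u t hx _ hsum
    obtain rfl : u = ∅ := eq_empty_of_forall_notMem fun i hi =>
      not_le.2 (hx i hi).1 (by simpa using (hx i hi).2)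
    exact ⟨∅, Subset.rfl, by simp at hsum ⊢; omega⟩
  | succ v ih =>
    intro u t hx ⟨e, hte⟩ hsum
    subst hte
    set W := {i ∈ u | x i = (v + 1 : ℕ)}
    by_cases hW : v ! * e ≤ #W
    · obtain ⟨K, hKW, -, hK⟩ := exists_subset_card_eq_sum_eq_mul x hW
      refine ⟨K, hKW.trans (filter_subset _ _), ?_⟩
      rw [hK, factorial_succ]
      push_cast
      ring
    -- too few copies of `v + 1`: use `v! * q` of them, so that the rest of the target is a
    -- multiple of `v!` again
    set q := #W / (v !)
    have hqW : v ! * q ≤ #W := Nat.mul_div_le _ _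
    have hWq : #W < v ! * (q + 1) := Nat.lt_mul_div_succ _ (factorial_pos v)
    have hqe : q < e := Nat.lt_of_mul_lt_mul_left (hqW.trans_lt (not_le.1 hW))
    obtain ⟨K, hKW, -, hK⟩ := exists_subset_card_eq_sum_eq_mul x hqW
    have hx' : ∀ i ∈ u \ W, 0 < x i ∧ x i ≤ v := fun i hi => by
      obtain ⟨hiu, hiW⟩ := mem_sdiff.1 hi
      have := hx i hiu
      have : x i ≠ (v + 1 : ℕ) := fun h => hiW (mem_filter.2 ⟨hiu, h⟩)
      push_cast at *
      omega
    have hsumW : ∑ i ∈ W, x i = #W * (v + 1 : ℕ) := by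
      rw [sum_congr rfl fun i hi => (mem_filter.1 hi).2, sum_const, nsmul_eq_mul]
    have hrest : ((v + 1) ! * (e - q) + v * v ! : ℕ) ≤ ∑ i ∈ u \ W, x i := by
      rw [sum_sdiff_eq_sub (filter_subset _ _), hsumW]
      have hWq' : (#W : ℤ) + 1 ≤ v ! * (q + 1) := by exact_mod_cast hWq
      have hf : (1 : ℤ) ≤ v ! := by exact_mod_cast factorial_pos v
      push_cast [Nat.cast_sub hqe.le, factorial_succ] at hsum ⊢
      nlinarith [mul_le_mul_of_nonneg_left hWq' (by positivity : (0 : ℤ) ≤ v + 1),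
        (by positivity : (0 : ℤ) ≤ v * v * v !)]
    obtain ⟨T, hTu, hT⟩ := ih hx' ((factorial_dvd_factorial (le_succ v)).mul_right _) hrest
    refine ⟨K ∪ T, union_subset (hKW.trans (filter_subset _ _)) (hTu.trans sdiff_subset), ?_⟩
    rw [sum_union (disjoint_of_subset_left hKW (disjoint_of_subset_right hTu disjoint_sdiff)),
      hK, hT]
    push_cast [Nat.cast_sub hqe.le, factorial_succ]
    ring

theorem exists_subset_sum_eq_zero_card_le {ζ : ℕ} (hζ : 0 < ζ) (hx : ∀ i, |x i| ≤ ζ)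
    {s : Finset ι} (hs : ∑ i ∈ s, x i = 0) (hne : s.Nonempty) :
    ∃ b ⊆ s, b.Nonempty ∧ #b ≤ 2 * ζ ^ 3 ∧ ∑ i ∈ b, x i = 0 := by
  have hζ3 : ζ ≤ ζ ^ 3 := Nat.le_self_pow (by norm_num) ζ
  by_cases hz : ∃ i ∈ s, x i = 0
  · obtain ⟨i, hi, hxi⟩ := hz
    exact ⟨{i}, singleton_subset_iff.2 hi, singleton_nonempty i, by simp; omega, by simpa⟩
  push Not at hz
  by_cases hrich : (∃ a : ℤ, 0 < a ∧ ζ ≤ #{i ∈ s | x i = a}) ∧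
      ∃ c : ℤ, 0 < c ∧ ζ ≤ #{i ∈ s | x i = -c}
  · obtain ⟨⟨a, ha, hA⟩, c, hc, hC⟩ := hrich
    have habs : ∀ d : ℤ, ζ ≤ #{i ∈ s | x i = d} → |d| ≤ ζ := fun d hd => by
      obtain ⟨i, hi⟩ := card_pos.1 (hζ.trans_le hd)
      rw [← (mem_filter.1 hi).2]
      exact hx i
    have haζ := habs a hA
    have hcζ := habs (-c) hC
    lift a to ℕ using ha.le
    lift c to ℕ using hc.le
    rw [abs_neg, Nat.abs_cast, Nat.cast_le] at *
    obtain ⟨K, hK, hKc, hKs⟩ := exists_subset_card_eq_sum_eq_mul x (hcζ.trans hA)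
    obtain ⟨L, hL, hLc, hLs⟩ := exists_subset_card_eq_sum_eq_mul x (haζ.trans hC)
    have hKL : Disjoint K L := disjoint_left.2 fun i hiK hiL => by
      have := (mem_filter.1 (hK hiK)).2
      have := (mem_filter.1 (hL hiL)).2
      omega
    refine ⟨K ∪ L, union_subset (hK.trans (filter_subset _ _)) (hL.trans (filter_subset _ _)),
      (card_pos.1 (by omega)).mono subset_union_left, ?_, ?_⟩
    · have := card_union_le K L
      nlinarith
    · rw [sum_union hKL, hKs, hLs]
      ring
  refine ⟨s, Subset.rfl, hne, ?_, hs⟩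
  rw [not_and_or] at hrich
  push Not at hrich
  rcases hrich with hfib | hfib
  · exact card_le_two_mul_pow_three_of_sum_eq_zero x (fun i _ => (abs_le.1 (hx i)).2) hz hs
      fun a ha => (hfib a ha).le
  · refine card_le_two_mul_pow_three_of_sum_eq_zero (-x)
      (fun i _ => neg_le.2 (abs_le.1 (hx i)).1) (fun i hi => neg_ne_zero.2 (hz i hi))
      (by simp [sum_neg_distrib, hs]) fun a ha => ?_
    simpa [neg_eq_iff_eq_neg] using (hfib a ha).le

theorem exists_subset_sum_eq_card_le {ζ F : ℕ} (hx : ∀ i, |x i| ≤ ζ) (hF : ζ ! ∣ F)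
    (hζF : ζ * ζ ! < F) {s : Finset ι} (hs : 0 < ∑ i ∈ s, x i)
    (hdvd : (F : ℤ) ∣ ∑ i ∈ s, x i) :
    ∃ b ⊆ s, #b ≤ 3 * F ∧ ∑ i ∈ b, x i = F := by
  have habs := sum_abs_eq_two_mul_sum_filter_pos_sub x s
  have hle_abs : ∑ i ∈ s, x i ≤ ∑ i ∈ s, |x i| := sum_le_sum fun i _ => le_abs_self (x i)
  have hζF' : (ζ * ζ ! : ℤ) < F := by exact_mod_cast hζF
  by_cases hbig : (F + ζ * ζ ! : ℤ) ≤ ∑ i ∈ s with 0 < x i, x i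
  · obtain ⟨T, hT, hTs⟩ := exists_subset_sum_eq_of_factorial_dvd x ζ
      (fun i hi => ⟨(mem_filter.1 hi).2, (abs_le.1 (hx i)).2⟩) hF hbig
    refine ⟨T, hT.trans (filter_subset _ _), ?_, hTs⟩
    have := card_nsmul_le_sum T x 1 fun i hi => (mem_filter.1 (hT hi)).2
    rw [hTs, nsmul_eq_mul, mul_one] at this
    omega
  have hSF : ∑ i ∈ s, x i = F := by
    have := Int.eq_zero_of_abs_lt_dvd (dvd_sub hdvd (dvd_refl _))
      (abs_lt.2 ⟨by linarith [Int.le_of_dvd hs hdvd], by linarith⟩)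
    linarith
  refine ⟨{i ∈ s | x i ≠ 0}, filter_subset _ _, ?_, by rwa [sum_filter_ne_zero]⟩
  have hcard := card_le_sum_abs x (s := {i ∈ s | x i ≠ 0}) fun i hi => (mem_filter.1 hi).2
  rw [sum_filter_of_ne fun i _ h => abs_ne_zero.1 h] at hcard
  have : (#{i ∈ s | x i ≠ 0} : ℤ) ≤ (3 * F : ℕ) := by push_cast; linarith
  exact_mod_cast this

theorem exists_finpartition_sum_eq_zero {ζ : ℕ} (hζ : 0 < ζ) (hx : ∀ i, |x i| ≤ ζ)
    {s : Finset ι} (hs : ∑ i ∈ s, x i = 0) :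
    ∃ P : Finpartition s, ∀ b ∈ P.parts, #b ≤ 2 * ζ ^ 3 ∧ ∑ i ∈ b, x i = 0 := by
  refine Finpartition.exists_forall_mem_parts_of_peel (fun t => ∑ i ∈ t, x i = 0) _
    (fun t ht hne => ?_) s hs
  obtain ⟨b, hbt, hb, hcard, hsum⟩ := exists_subset_sum_eq_zero_card_le x hζ hx ht hne
  exact ⟨b, hbt, hb, ⟨hcard, hsum⟩, by rw [sum_sdiff_eq_sub hbt, ht, hsum, sub_zero]⟩

theorem exists_finpartition_sum_eq_zero_or_eq {ζ F : ℕ} (hζ : 0 < ζ) (hx : ∀ i, |x i| ≤ ζ)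
    (hF : ζ ! ∣ F) (hζF : ζ * ζ ! < F) {s : Finset ι} (hs : 0 ≤ ∑ i ∈ s, x i)
    (hdvd : (F : ℤ) ∣ ∑ i ∈ s, x i) :
    ∃ P : Finpartition s, ∀ b ∈ P.parts,
      #b ≤ max (2 * ζ ^ 3) (3 * F) ∧ (∑ i ∈ b, x i = 0 ∨ ∑ i ∈ b, x i = F) := by
  refine Finpartition.exists_forall_mem_parts_of_peel
    (fun t => 0 ≤ ∑ i ∈ t, x i ∧ (F : ℤ) ∣ ∑ i ∈ t, x i) _
    (fun t ⟨ht, htF⟩ hne => ?_) s ⟨hs, hdvd⟩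
  rcases ht.eq_or_lt with ht0 | htpos
  · obtain ⟨b, hbt, hb, hcard, hsum⟩ := exists_subset_sum_eq_zero_card_le x hζ hx ht0.symm hne
    refine ⟨b, hbt, hb, ⟨le_max_of_le_left hcard, .inl hsum⟩, ?_⟩
    rw [sum_sdiff_eq_sub hbt, hsum, sub_zero]
    exact ⟨ht, htF⟩
  · obtain ⟨b, hbt, hcard, hsum⟩ := exists_subset_sum_eq_card_le x hx hF hζF htpos htF
    have hFpos : (0 : ℤ) < F := by exact_mod_cast (Nat.zero_le _).trans_lt hζF
    refine ⟨b, hbt, nonempty_of_sum_ne_zero (hsum ▸ hFpos.ne'),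
      ⟨le_max_of_le_right hcard, .inr hsum⟩, ?_⟩
    rw [sum_sdiff_eq_sub hbt, hsum]
    exact ⟨sub_nonneg.2 (Int.le_of_dvd htpos htF), dvd_sub htF (dvd_refl _)⟩

theorem exists_finpartition_sum_eq_zero_or_eq_sign_mul {ζ F : ℕ} (hζ : 0 < ζ)
    (hx : ∀ i, |x i| ≤ ζ) (hF : ζ ! ∣ F) (hζF : ζ * ζ ! < F) {s : Finset ι}
    (hdvd : (F : ℤ) ∣ ∑ i ∈ s, x i) :
    ∃ P : Finpartition s, ∀ b ∈ P.parts, #b ≤ max (2 * ζ ^ 3) (3 * F) ∧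
      (∑ i ∈ b, x i = 0 ∨ ∑ i ∈ b, x i = (∑ i ∈ s, x i).sign * F) := by
  rcases lt_trichotomy (∑ i ∈ s, x i) 0 with hneg | hzero | hpos
  · obtain ⟨P, hP⟩ :=
      exists_finpartition_sum_eq_zero_or_eq (-x) hζ (by simpa using hx) hF hζF (s := s)
        (by simp [sum_neg_distrib, hneg.le]) (by simpa [sum_neg_distrib] using hdvd)
    refine ⟨P, fun b hb => ?_⟩
    obtain ⟨hcard, hsum⟩ := hP b hb
    simp only [Pi.neg_apply, sum_neg_distrib, neg_eq_iff_eq_neg] at hsum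
    rw [Int.sign_eq_neg_one_of_neg hneg, neg_one_mul]
    exact ⟨hcard, hsum⟩
  · obtain ⟨P, hP⟩ := exists_finpartition_sum_eq_zero x hζ hx hzero
    exact ⟨P, fun b hb => ⟨le_max_of_le_left (hP b hb).1, .inl (hP b hb).2⟩⟩
  · obtain ⟨P, hP⟩ := exists_finpartition_sum_eq_zero_or_eq x hζ hx hF hζF hpos.le hdvd
    rw [Int.sign_eq_one_of_pos hpos, one_mul]
    exact ⟨P, hP⟩

end

/-- integers `x₁,…,x_m` with `|x_i| ≤ ζ` whose sum `x` is a multiple of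
`(6ζ²+2ζ+1)!` can be partitioned into subsets `T_k` with `|T_k| ≤ (6ζ²+2ζ+1)!·(6ζ+2)`
and `∑_{i∈T_k} x_i ∈ {0, sgn(x)·(6ζ²+2ζ+1)!}`. -/
theorem stmt7 (ζ m : ℕ) (hζ : 0 < ζ)
    (x : Fin m → ℤ) (hub : ∀ i, |x i| ≤ (ζ : ℤ))
    (hdvd : ((Nat.factorial (6 * ζ ^ 2 + 2 * ζ + 1) : ℤ)) ∣ ∑ i, x i) :
    ∃ (m' : ℕ) (T : Fin m' → Finset (Fin m)),
      (∀ k l, k ≠ l → Disjoint (T k) (T l)) ∧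
      (∀ i, ∃ k, i ∈ T k) ∧
      ∀ k, (T k).card ≤ Nat.factorial (6 * ζ ^ 2 + 2 * ζ + 1) * (6 * ζ + 2) ∧
        (∑ i ∈ T k, x i = 0 ∨
          ∑ i ∈ T k, x i
            = (∑ i, x i).sign * (Nat.factorial (6 * ζ ^ 2 + 2 * ζ + 1) : ℤ)) := by
  set F := (6 * ζ ^ 2 + 2 * ζ + 1)!
  have hζF : ζ * ζ ! < F := calc
    ζ * ζ ! < (ζ + 1)! := by
      rw [factorial_succ]
      exact Nat.mul_lt_mul_of_pos_right (lt_succ_self ζ) (factorial_pos ζ)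
    _ ≤ F := factorial_le (by nlinarith)
  obtain ⟨P, hP⟩ := exists_finpartition_sum_eq_zero_or_eq_sign_mul x hζ hub
    (factorial_dvd_factorial (by nlinarith)) hζF hdvd
  obtain ⟨m', T, hdisj, hcover, hT⟩ := P.exists_fin_enum
  refine ⟨m', T, hdisj, fun i => hcover i (mem_univ i), fun k => ?_⟩
  obtain ⟨hcard, hsum⟩ := hP _ (hT k)
  have hF : 6 * ζ ^ 2 + 2 * ζ + 1 ≤ F := self_le_factorial _
  refine ⟨hcard.trans (max_le ?_ ?_), hsum⟩ <;> nlinarith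
end

section
/- Let H_com be a combinatorial 4-block n-fold matrix with parameters Δ, t_A, t_B, s_D, t_D, and let G ∈ ℤ_{>0} be such that every Graver basis element of H_com^{two-stage} has ℓ∞-norm at most G. Set λ₀ = Δ·t_B·G and λ = (6λ₀² + 2λ₀ + 1)!. If g ∈ ker_ℤ(H_com) and the integer B g⁰ is a multiple of λ, then g admits a uniform decomposition g = Σ_{j=1}^N η_j such that, for every j, ‖η_j‖∞ ≤ (6λ₀² + 2λ₀ + 1)!·(6λ₀ + 2)·G and B η_j⁰ ∈ {0, sgn(B g⁰)·λ}; in particular every B η_j⁰ is a multiple of λ. -/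
open Matrix

/-- `(6·l₀² + 2·l₀ + 1)!`, the value `λ` of Lemma 12 with `λ₀ = l₀`. -/
def lamF (l0 : ℕ) : ℕ := Nat.factorial (6 * l0 ^ 2 + 2 * l0 + 1)


/-!
Decompose `g` conformally into Graver elements `hᵢ` of the two-stage matrix. Each satisfies
`|B hᵢ⁰| ≤ λ₀`, and these integers sum to `B g⁰`, a multiple of `λ`. A purely combinatorial
fact partitions any such family into blocks of size at most `(2λ₀+1)·λ`, each summing to
`0` or to `sgn(B g⁰)·λ`; it only needs `λ₀! ∣ λ` and `λ₀·λ₀! < λ`. Summing the `hᵢ` over each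
block gives the uniform decomposition, with `‖ηⱼ‖∞ ≤ (2λ₀+1)·λ·G`.
-/

open Finset

section ConformalOrder

variable {ι : Type*}

lemma mul_nonneg_and_abs_le_iff_mem_uIcc {x y : ℤ} :
    (0 ≤ x * y ∧ |x| ≤ |y|) ↔ x ∈ Set.uIcc 0 y := by
  rw [Set.mem_uIcc]
  constructor
  · rintro ⟨hxy, habs⟩
    rcases lt_trichotomy y 0 with hy | rfl | hy
    · have hx : x ≤ 0 := nonpos_of_mul_nonneg_left hxy hy
      rw [abs_of_nonpos hx, abs_of_neg hy] at habs
      exact Or.inr ⟨by linarith, hx⟩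
    · simp_all
    · have hx : 0 ≤ x := nonneg_of_mul_nonneg_left hxy hy
      rw [abs_of_nonneg hx, abs_of_pos hy] at habs
      exact Or.inl ⟨hx, habs⟩
  · rintro (⟨hx, hxy⟩ | ⟨hxy, hx⟩)
    · rw [abs_of_nonneg hx, abs_of_nonneg (hx.trans hxy)]
      exact ⟨by nlinarith, hxy⟩
    · rw [abs_of_nonpos hx, abs_of_nonpos (hxy.trans hx)]
      exact ⟨by nlinarith, by linarith⟩

lemma conf_iff_forall_mem_uIcc {x y : ι → ℤ} : Conf x y ↔ ∀ k, x k ∈ Set.uIcc 0 (y k) :=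
  forall_congr' fun _ => mul_nonneg_and_abs_le_iff_mem_uIcc

lemma conf_refl (x : ι → ℤ) : Conf x x :=
  conf_iff_forall_mem_uIcc.2 fun _ => Set.right_mem_uIcc

lemma Conf.trans {x y z : ι → ℤ} (hxy : Conf x y) (hyz : Conf y z) : Conf x z := by
  rw [conf_iff_forall_mem_uIcc] at *
  exact fun k => Set.uIcc_subset_uIcc Set.left_mem_uIcc (hyz k) (hxy k)

lemma Conf.sub_conf {x g : ι → ℤ} (h : Conf x g) : Conf (g - x) g := by
  rw [conf_iff_forall_mem_uIcc] at *
  intro k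
  have := h k
  simp only [Pi.sub_apply, Set.mem_uIcc] at this ⊢
  omega

lemma conf_sum_of_sum_eq {κ : Type*} [Fintype κ] {h : κ → ι → ℤ} {g : ι → ℤ}
    (hconf : ∀ i, Conf (h i) g) (hsum : ∑ i, h i = g) (t : Finset κ) :
    Conf (∑ i ∈ t, h i) g := by
  classical
  simp only [conf_iff_forall_mem_uIcc, Finset.sum_apply] at hconf ⊢
  intro k
  have hk : ∑ i, h i k = g k := by rw [← hsum, Finset.sum_apply]
  have hsplit := sum_sdiff (f := fun i => h i k) (subset_univ t)
  rcases le_total 0 (g k) with hg | hg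
  · have hi : ∀ i, h i k ∈ Set.Icc 0 (g k) := fun i => Set.uIcc_of_le hg ▸ hconf i k
    have := sum_nonneg fun i (_ : i ∈ univ \ t) => (hi i).1
    exact Set.uIcc_of_le hg ▸ ⟨sum_nonneg fun i _ => (hi i).1, by linarith⟩
  · have hi : ∀ i, h i k ∈ Set.Icc (g k) 0 := fun i => Set.uIcc_of_ge hg ▸ hconf i k
    have := sum_nonpos fun i (_ : i ∈ univ \ t) => (hi i).2
    exact Set.uIcc_of_ge hg ▸ ⟨by linarith, sum_nonpos fun i _ => (hi i).2⟩

variable [Fintype ι]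

def l1Norm (x : ι → ℤ) : ℕ := ∑ k, (x k).natAbs

lemma l1Norm_pos {x : ι → ℤ} (hx : x ≠ 0) : 0 < l1Norm x := by
  obtain ⟨k, hk⟩ := Function.ne_iff.1 hx
  exact lt_of_lt_of_le (Int.natAbs_pos.2 hk)
    (single_le_sum (f := fun k => (x k).natAbs) (fun _ _ => Nat.zero_le _) (mem_univ k))

lemma Conf.l1Norm_sub_add {x g : ι → ℤ} (h : Conf x g) :
    l1Norm (g - x) + l1Norm x = l1Norm g := by
  rw [l1Norm, l1Norm, l1Norm, ← sum_add_distrib]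
  refine sum_congr rfl fun k _ => ?_
  have := conf_iff_forall_mem_uIcc.1 h k
  simp only [Pi.sub_apply, Set.mem_uIcc] at this ⊢
  omega

lemma Conf.eq_of_l1Norm_le {x y : ι → ℤ} (h : Conf y x) (hle : l1Norm x ≤ l1Norm y) :
    y = x := by
  have hk : ∀ k, y k ∈ Set.uIcc 0 (x k) := conf_iff_forall_mem_uIcc.1 h
  have habs : ∀ k ∈ univ, (y k).natAbs ≤ (x k).natAbs := fun k _ => by
    have := hk k
    simp only [Set.mem_uIcc] at this
    omega
  have heq := (sum_eq_sum_iff_of_le habs).1 (le_antisymm (sum_le_sum habs) hle)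
  funext k
  have := hk k
  have := heq k (mem_univ k)
  simp only [Set.mem_uIcc] at *
  omega

end ConformalOrder

section GraverDecomposition

variable {R ι : Type*} [Fintype R] [Fintype ι] (M : Matrix R ι ℤ)

/-- Take a nonzero kernel element `⊑ g` of least `ℓ₁`-norm. -/
lemma exists_isGraver_conf {g : ι → ℤ} (hg : M *ᵥ g = 0) (hg0 : g ≠ 0) :
    ∃ x, IsGraver M x ∧ Conf x g := by
  obtain ⟨x, ⟨hx, hx0, hxg⟩, hmin⟩ := (measure (l1Norm (ι := ι))).wf.has_min
    {x | M *ᵥ x = 0 ∧ x ≠ 0 ∧ Conf x g} ⟨g, hg, hg0, conf_refl g⟩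
  refine ⟨x, ⟨hx, hx0, fun y hy hy0 hyx => hyx.eq_of_l1Norm_le ?_⟩, hxg⟩
  exact not_lt.1 (hmin y ⟨hy, hy0, hyx.trans hxg⟩)

theorem exists_sum_isGraver_conf {g : ι → ℤ} (hg : M *ᵥ g = 0) :
    ∃ (m : ℕ) (h : Fin m → ι → ℤ),
      ∑ i, h i = g ∧ ∀ i, IsGraver M (h i) ∧ Conf (h i) g := by
  induction hN : l1Norm g using Nat.strong_induction_on generalizing g with
  | _ N ih =>
  by_cases hg0 : g = 0
  · exact ⟨0, Fin.elim0, by simp [hg0], Fin.rec0⟩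
  obtain ⟨x, hx, hxg⟩ := exists_isGraver_conf M hg hg0
  have hlt : l1Norm (g - x) < N := by
    have := hxg.l1Norm_sub_add
    have := l1Norm_pos hx.2.1
    omega
  obtain ⟨m, h, hsum, hh⟩ :=
    ih _ hlt (by rw [Matrix.mulVec_sub, hg, hx.1, sub_zero]) rfl
  refine ⟨m + 1, Fin.cons x h, by rw [Fin.sum_cons, hsum, add_sub_cancel],
    Fin.cases ⟨hx, hxg⟩ fun i => ⟨(hh i).1, (hh i).2.trans hxg.sub_conf⟩⟩

end GraverDecomposition

section ZeroSumBlocks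

variable {ι : Type*} {l0 : ℕ} {a : ι → ℤ}

lemma exists_mem_abs_add_le (hb : ∀ i, |a i| ≤ l0) {s : Finset ι} (hs : s.Nonempty) {p : ℤ}
    (hp : |p| ≤ l0) (hsum : p + ∑ i ∈ s, a i = 0) : ∃ e ∈ s, |p + a e| ≤ l0 := by
  rcases lt_trichotomy p 0 with hneg | rfl | hpos
  · obtain ⟨e, he, hae⟩ := exists_lt_of_sum_lt (f := 0) (g := a) (s := s)
      (by simp only [Pi.zero_apply, sum_const_zero]; linarith)
    have := abs_le.1 (hb e)
    have := abs_le.1 hp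
    simp only [Pi.zero_apply] at hae
    exact ⟨e, he, abs_le.2 ⟨by omega, by omega⟩⟩
  · obtain ⟨e, he⟩ := hs
    exact ⟨e, he, by simpa using hb e⟩
  · obtain ⟨e, he, hae⟩ := exists_lt_of_sum_lt (f := a) (g := 0) (s := s)
      (by simp only [Pi.zero_apply, sum_const_zero]; linarith)
    have := abs_le.1 (hb e)
    have := abs_le.1 hp
    simp only [Pi.zero_apply] at hae
    exact ⟨e, he, abs_le.2 ⟨by omega, by omega⟩⟩

variable [DecidableEq ι]

/-- A one-dimensional Steinitz lemma: at each step pick a summand whose sign is opposite to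
that of the current partial sum. -/
lemma exists_list_abs_add_sum_take_le (hb : ∀ i, |a i| ≤ l0) (s : Finset ι) {p : ℤ}
    (hp : |p| ≤ l0) (hsum : p + ∑ i ∈ s, a i = 0) :
    ∃ l : List ι, l.Nodup ∧ l.toFinset = s ∧ ∀ j, |p + ((l.take j).map a).sum| ≤ l0 := by
  induction s using Finset.strongInduction generalizing p with
  | H s ih =>
  rcases s.eq_empty_or_nonempty with rfl | hs
  · exact ⟨[], List.nodup_nil, rfl, fun j => by simpa using hp⟩
  obtain ⟨e, he, hpe⟩ := exists_mem_abs_add_le hb hs hp hsum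
  obtain ⟨l, hnd, hl, hpre⟩ := ih (s.erase e) (erase_ssubset he) hpe
    (by rw [add_assoc, add_sum_erase s a he, hsum])
  refine ⟨e :: l, List.nodup_cons.2 ⟨by simp [← List.mem_toFinset, hl], hnd⟩,
    by rw [List.toFinset_cons, hl, insert_erase he], ?_⟩
  rintro (_ | j)
  · simpa using hp
  · simpa [add_assoc] using hpre j

/-- Two of the first `2 l0 + 2` partial sums of a Steinitz ordering coincide, and the summands
between them form the block. -/
theorem exists_subset_card_le_sum_eq_zero (hb : ∀ i, |a i| ≤ l0) {s : Finset ι}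
    (hs : s.Nonempty) (hsum : ∑ i ∈ s, a i = 0) :
    ∃ t ⊆ s, t.Nonempty ∧ t.card ≤ 2 * l0 + 1 ∧ ∑ i ∈ t, a i = 0 := by
  rcases le_or_gt s.card (2 * l0 + 1) with hcard | hcard
  · exact ⟨s, subset_rfl, hs, hcard, hsum⟩
  obtain ⟨l, hnd, rfl, hpre⟩ :=
    exists_list_abs_add_sum_take_le hb s (p := 0) (by simp) (by simpa using hsum)
  rw [List.toFinset_card_of_nodup hnd] at hcard
  have hmaps : ∀ j ∈ range (2 * l0 + 2), ((l.take j).map a).sum ∈ Icc (-(l0 : ℤ)) l0 :=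
    fun j _ => mem_Icc.2 (abs_le.1 (by simpa using hpre j))
  obtain ⟨j, hj, j', hj', hne, heq⟩ :=
    exists_ne_map_eq_of_card_lt_of_maps_to (by rw [Int.card_Icc, card_range]; omega) hmaps
  wlog hjj' : j < j' generalizing j j'
  · exact this j' hj' j hj hne.symm heq.symm (by omega)
  obtain ⟨d, rfl⟩ := Nat.exists_eq_add_of_lt hjj'
  rw [mem_range] at hj'
  set blk := (l.drop j).take (d + 1)
  have hsub : blk.Sublist l := (List.take_sublist _ _).trans (List.drop_sublist _ _)
  have hblk : blk.length = d + 1 := by rw [List.length_take, List.length_drop]; omega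
  have hblksum : (blk.map a).sum = 0 := by
    rw [add_assoc, List.take_add, List.map_append, List.sum_append] at heq
    linarith
  refine ⟨blk.toFinset, fun i hi => List.mem_toFinset.2 (hsub.subset (List.mem_toFinset.1 hi)),
    ?_, ?_, ?_⟩
  · exact List.toFinset_nonempty_iff _ |>.2 (List.ne_nil_of_length_pos (by omega))
  · rw [List.toFinset_card_of_nodup (hnd.sublist hsub)]
    omega
  · rw [List.sum_toFinset a (hnd.sublist hsub), hblksum]

end ZeroSumBlocks

section ExactSums

variable {ι : Type*} {l0 : ℕ} {a : ι → ℤ}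

/-- Some value `v ≤ l0` carries total weight at least `l0!`, and `l0! / v` of its
occurrences sum to `l0!`. -/
lemma exists_subset_sum_eq_factorial {s : Finset ι} (hval : ∀ i ∈ s, 0 < a i ∧ a i ≤ l0)
    (hsum : l0 * l0.factorial < ∑ i ∈ s, a i) :
    ∃ u ⊆ s, u.card ≤ l0.factorial ∧ ∑ i ∈ u, a i = l0.factorial := by
  have hmaps : ∀ i ∈ s, a i ∈ Icc (1 : ℤ) l0 :=
    fun i hi => mem_Icc.2 ⟨(hval i hi).1, (hval i hi).2⟩
  obtain ⟨v, hv, hvsum⟩ := exists_lt_sum_fiber_of_maps_to_of_nsmul_lt_sum hmaps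
    (b := (l0.factorial : ℤ) - 1) (w := a)
    (by rw [Int.card_Icc, add_sub_cancel_right, Int.toNat_natCast, nsmul_eq_mul]; nlinarith)
  rw [mem_Icc] at hv
  lift v to ℕ using (by omega)
  set F := s.filter fun i => a i = v
  have hF : ∀ u ⊆ F, ∑ i ∈ u, a i = u.card * v := fun u hu => by
    rw [sum_congr rfl fun i hi => (mem_filter.1 (hu hi)).2, sum_const, nsmul_eq_mul]
  have hvd : v ∣ l0.factorial := Nat.dvd_factorial (by omega) (by omega)
  have hFv : l0.factorial ≤ v * F.card := by
    rw [hF F subset_rfl] at hvsum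
    rw [mul_comm]
    exact_mod_cast Int.le_of_sub_one_lt hvsum
  obtain ⟨u, huF, hu⟩ := exists_subset_card_eq (s := F) (Nat.div_le_of_le_mul hFv)
  refine ⟨u, huF.trans (filter_subset _ _), hu ▸ Nat.div_le_self _ _, ?_⟩
  rw [hF u huF, hu]
  exact_mod_cast Nat.div_mul_cancel hvd

variable [DecidableEq ι]

lemma exists_subset_sum_eq_mul_factorial {s : Finset ι}
    (hval : ∀ i ∈ s, 0 < a i ∧ a i ≤ l0)
    (k : ℕ) (hsum : (k + l0) * l0.factorial < ∑ i ∈ s, a i) :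
    ∃ t ⊆ s, t.card ≤ k * l0.factorial ∧ ∑ i ∈ t, a i = k * l0.factorial := by
  induction k generalizing s with
  | zero => exact ⟨∅, empty_subset s, by simp⟩
  | succ k ih =>
    obtain ⟨u, hus, hu, husum⟩ :=
      exists_subset_sum_eq_factorial hval (by push_cast at hsum; nlinarith)
    obtain ⟨t, hts, ht, htsum⟩ := ih (s := s \ u) (fun i hi => hval i (mem_sdiff.1 hi).1)
      (by rw [sum_sdiff_eq_sub hus, husum]; push_cast at hsum ⊢; linarith)
    refine ⟨t ∪ u, union_subset (hts.trans sdiff_subset) hus, ?_, ?_⟩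
    · exact (card_union_le t u).trans (by rw [Nat.succ_mul]; omega)
    · rw [sum_union (disjoint_of_subset_left hts sdiff_disjoint), htsum, husum]
      push_cast
      ring

/-- If the positive summands are plentiful, they alone supply `L` in chunks of `l0!`;
otherwise the total is exactly `L` and there are few nonzero summands. -/
theorem exists_subset_card_le_sum_eq {L : ℕ} (hL : l0.factorial ∣ L)
    (hlt : l0 * l0.factorial < L) (hb : ∀ i, |a i| ≤ l0) {s : Finset ι}
    (hdvd : (L : ℤ) ∣ ∑ i ∈ s, a i) (hpos : 0 < ∑ i ∈ s, a i) :
    ∃ t ⊆ s, t.card ≤ (2 * l0 + 1) * L ∧ ∑ i ∈ t, a i = L := by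
  set P := s.filter fun i => 0 < a i
  have hP : ∑ i ∈ P, a i = ∑ i ∈ s, if 0 < a i then a i else 0 := sum_filter _ _
  have hfL : l0.factorial ≤ L := Nat.le_of_dvd (by omega) hL
  rcases lt_or_ge ((L : ℤ) + l0 * l0.factorial) (∑ i ∈ P, a i) with hbig | hsmall
  · obtain ⟨k, rfl⟩ := hL
    obtain ⟨t, htP, ht, htsum⟩ := exists_subset_sum_eq_mul_factorial (s := P)
      (fun i hi => ⟨(mem_filter.1 hi).2, (abs_le.1 (hb i)).2⟩) k
      (by push_cast at hbig ⊢; linarith)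
    refine ⟨t, htP.trans (filter_subset _ _), ?_, by rw [htsum]; push_cast; ring⟩
    calc t.card ≤ k * l0.factorial := ht
      _ ≤ (2 * l0 + 1) * (l0.factorial * k) := by nlinarith
  · have hsP : ∑ i ∈ s, a i ≤ ∑ i ∈ P, a i :=
      hP ▸ sum_le_sum fun i _ => by split_ifs <;> omega
    have hS : ∑ i ∈ s, a i = L := by
      obtain ⟨c, hc⟩ := hdvd
      have : c = 1 := by
        have h1 : (L : ℤ) * c < L * 2 := by nlinarith
        have h2 : (0 : ℤ) < L * c := hc ▸ hpos
        have hL0 : (0 : ℤ) < L := by omega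
        have := lt_of_mul_lt_mul_left h1 hL0.le
        have := pos_of_mul_pos_right h2 hL0.le
        omega
      rw [hc, this, mul_one]
    have habs : ∑ i ∈ s, |a i| = 2 * ∑ i ∈ P, a i - ∑ i ∈ s, a i := by
      rw [hP, mul_sum, ← sum_sub_distrib]
      refine sum_congr rfl fun i _ => ?_
      split_ifs with h
      · rw [abs_of_pos h]; ring
      · rw [abs_of_nonpos (not_lt.1 h)]; ring
    have hcard : ((s.filter fun i => a i ≠ 0).card : ℤ) ≤ ∑ i ∈ s, |a i| :=
      calc ((s.filter fun i => a i ≠ 0).card : ℤ)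
          ≤ ∑ i ∈ s.filter (fun i => a i ≠ 0), |a i| := by
            rw [card_eq_sum_ones, Nat.cast_sum, Nat.cast_one]
            exact sum_le_sum fun i hi => Int.one_le_abs (mem_filter.1 hi).2
        _ ≤ ∑ i ∈ s, |a i| :=
            sum_le_sum_of_subset_of_nonneg (filter_subset _ _) fun i _ _ => abs_nonneg _
    refine ⟨s.filter fun i => a i ≠ 0, filter_subset _ _, ?_, by rw [sum_filter_ne_zero, hS]⟩
    have : (l0 : ℤ) * l0.factorial ≤ l0 * L := by
      exact_mod_cast Nat.mul_le_mul_left l0 hfL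
    have : ((s.filter fun i => a i ≠ 0).card : ℤ) ≤ (2 * l0 + 1) * L := by linarith
    exact_mod_cast this

end ExactSums

theorem exists_finpartition_of_forall_exists_subset {α : Type*} [DecidableEq α]
    {p q : Finset α → Prop}
    (hstep : ∀ s, q s → s.Nonempty → ∃ t ⊆ s, t.Nonempty ∧ p t ∧ q (s \ t))
    (s : Finset α) (hs : q s) : ∃ P : Finpartition s, ∀ t ∈ P.parts, p t := by
  induction s using Finset.strongInduction with
  | H s ih =>
  rcases s.eq_empty_or_nonempty with rfl | hne
  · exact ⟨Finpartition.empty _, by simp⟩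
  obtain ⟨t, hts, htne, hpt, hqt⟩ := hstep s hs hne
  obtain ⟨P, hP⟩ := ih (s \ t) (sdiff_ssubset hts htne) hqt
  refine ⟨P.extend htne.ne_empty disjoint_sdiff_self_left (sdiff_union_of_subset hts), ?_⟩
  simp only [Finpartition.extend_parts, mem_insert, forall_eq_or_imp]
  exact ⟨hpt, hP⟩

lemma Finpartition.sum_sum_parts {α M : Type*} [DecidableEq α] [AddCommMonoid M]
    {s : Finset α} (P : Finpartition s) (f : α → M) :
    ∑ t ∈ P.parts, ∑ i ∈ t, f i = ∑ i ∈ s, f i := by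
  conv_rhs => rw [← P.biUnion_parts]
  exact (sum_biUnion P.supIndep.pairwiseDisjoint).symm

section Partition

variable {ι : Type*} [DecidableEq ι] {l0 L : ℕ} {a : ι → ℤ}

theorem exists_finpartition_sum_eq_zero_or_eq_s8 (hL : l0.factorial ∣ L)
    (hlt : l0 * l0.factorial < L) (hb : ∀ i, |a i| ≤ l0) (s : Finset ι)
    (hdvd : (L : ℤ) ∣ ∑ i ∈ s, a i) (hnn : 0 ≤ ∑ i ∈ s, a i) :
    ∃ P : Finpartition s, ∀ t ∈ P.parts,
      t.card ≤ (2 * l0 + 1) * L ∧ (∑ i ∈ t, a i = 0 ∨ ∑ i ∈ t, a i = L) := by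
  refine exists_finpartition_of_forall_exists_subset
    (q := fun s => (L : ℤ) ∣ ∑ i ∈ s, a i ∧ 0 ≤ ∑ i ∈ s, a i) ?_ s ⟨hdvd, hnn⟩
  rintro s ⟨hdvd, hnn⟩ hs
  rcases hnn.lt_or_eq with hpos | hzero
  · obtain ⟨t, hts, htcard, htsum⟩ := exists_subset_card_le_sum_eq hL hlt hb hdvd hpos
    have hle : (L : ℤ) ≤ ∑ i ∈ s, a i := Int.le_of_dvd hpos hdvd
    refine ⟨t, hts, nonempty_of_sum_ne_zero (by rw [htsum]; exact_mod_cast (by omega : L ≠ 0)),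
      ⟨htcard, Or.inr htsum⟩, ?_⟩
    rw [sum_sdiff_eq_sub hts, htsum]
    exact ⟨dvd_sub hdvd dvd_rfl, by linarith⟩
  · obtain ⟨t, hts, htne, htcard, htsum⟩ := exists_subset_card_le_sum_eq_zero hb hs hzero.symm
    refine ⟨t, hts, htne,
      ⟨htcard.trans (Nat.le_mul_of_pos_right _ (by omega)), Or.inl htsum⟩, ?_⟩
    rw [sum_sdiff_eq_sub hts, htsum, ← hzero, sub_zero]
    exact ⟨dvd_zero _, le_rfl⟩

theorem exists_finpartition_sum_eq_zero_or_sign_mul (hL : l0.factorial ∣ L)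
    (hlt : l0 * l0.factorial < L) (hb : ∀ i, |a i| ≤ l0) (s : Finset ι)
    (hdvd : (L : ℤ) ∣ ∑ i ∈ s, a i) :
    ∃ P : Finpartition s, ∀ t ∈ P.parts, t.card ≤ (2 * l0 + 1) * L ∧
      (∑ i ∈ t, a i = 0 ∨ ∑ i ∈ t, a i = (∑ i ∈ s, a i).sign * L) := by
  wlog hnn : 0 ≤ ∑ i ∈ s, a i generalizing a
  · obtain ⟨P, hP⟩ := this (a := -a) (fun i => by simpa using hb i) (by simpa using hdvd)
      (by simp only [Pi.neg_apply, sum_neg_distrib]; linarith)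
    refine ⟨P, fun t ht => ⟨(hP t ht).1, ?_⟩⟩
    have := (hP t ht).2
    simp only [Pi.neg_apply, sum_neg_distrib, Int.sign_neg, neg_eq_zero] at this
    exact this.imp_right fun h => by linarith
  obtain ⟨P, hP⟩ := exists_finpartition_sum_eq_zero_or_eq_s8 hL hlt hb s hdvd hnn
  refine ⟨P, fun t ht => ⟨(hP t ht).1, ?_⟩⟩
  rcases hnn.lt_or_eq with hpos | hzero
  · rw [Int.sign_eq_one_of_pos hpos, one_mul]
    exact (hP t ht).2
  · have hblock_nonneg : ∀ t ∈ P.parts, 0 ≤ ∑ i ∈ t, a i := fun t ht =>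
      (hP t ht).2.elim (fun h => h.symm.le) fun h => h ▸ Nat.cast_nonneg L
    exact Or.inl <| (sum_eq_zero_iff_of_nonneg hblock_nonneg).1
      ((P.sum_sum_parts a).trans hzero.symm) t ht

end Partition

lemma factorial_dvd_lamF (l0 : ℕ) : l0.factorial ∣ lamF l0 :=
  Nat.factorial_dvd_factorial (by nlinarith)

lemma mul_factorial_lt_lamF (l0 : ℕ) : l0 * l0.factorial < lamF l0 :=
  calc l0 * l0.factorial < (l0 + 1).factorial := by
        rw [Nat.factorial_succ]; nlinarith [Nat.factorial_pos l0]
    _ ≤ lamF l0 := Nat.factorial_le (by nlinarith)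

section NormBounds

variable {ι : Type*} [Fintype ι]

lemma natAbs_le_linf (x : ι → ℤ) (k : ι) : (x k).natAbs ≤ linf x :=
  le_sup (f := fun k => (x k).natAbs) (mem_univ k)

lemma linf_sum_le_card_mul {κ : Type*} {h : κ → ι → ℤ} {t : Finset κ} {G : ℕ}
    (hG : ∀ i ∈ t, linf (h i) ≤ G) : linf (∑ i ∈ t, h i) ≤ t.card * G :=
  Finset.sup_le fun k _ => by
    rw [Finset.sum_apply]
    calc (∑ i ∈ t, h i k).natAbs ≤ ∑ i ∈ t, (h i k).natAbs := Int.natAbs_sum_le _ _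
      _ ≤ ∑ i ∈ t, G := sum_le_sum fun i hi => (natAbs_le_linf _ k).trans (hG i hi)
      _ = t.card * G := by rw [sum_const, smul_eq_mul]

lemma abs_mulVec_apply_le {m : Type*} {B : Matrix m ι ℤ} {v : ι → ℤ} {Δ G : ℤ}
    (hB : ∀ r c, |B r c| ≤ Δ) (hv : ∀ c, |v c| ≤ G) (r : m) :
    |(B *ᵥ v) r| ≤ Δ * Fintype.card ι * G :=
  calc |(B *ᵥ v) r| ≤ ∑ c, |B r c * v c| := abs_sum_le_sum_abs _ _
    _ ≤ ∑ _c : ι, Δ * G := sum_le_sum fun c _ => by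
        rw [abs_mul]
        exact mul_le_mul (hB r c) (hv c) (abs_nonneg _) ((abs_nonneg _).trans (hB r c))
    _ = Δ * Fintype.card ι * G := by rw [sum_const, card_univ, nsmul_eq_mul]; ring

end NormBounds

section NFold

variable {n sA tA tB : ℕ}

lemma Htwo_mulVec_eq_zero_of_H4 {sD : ℕ} {C : Matrix (Fin sD) (Fin tB) ℤ}
    {D : Fin n → Matrix (Fin sD) (Fin tA) ℤ} {B : Fin n → Matrix (Fin sA) (Fin tB) ℤ}
    {A : Fin n → Matrix (Fin sA) (Fin tA) ℤ} {g : Fin tB ⊕ Fin n × Fin tA → ℤ}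
    (hg : H4 C D B A *ᵥ g = 0) : Htwo B A *ᵥ g = 0 := by
  have hrow : ∀ r, Htwo B A r = H4 C D B A (Sum.inr r) := fun r => funext fun c => by
    cases c <;> rfl
  exact funext fun r => (congrArg (· ⬝ᵥ g) (hrow r)).trans (congrFun hg (Sum.inr r))

lemma mulVec_sum_inl {κ : Type*} {m : Type*} (B : Matrix m (Fin tB) ℤ) (t : Finset κ)
    (h : κ → Fin tB ⊕ Fin n × Fin tA → ℤ) :
    B *ᵥ (fun c => (∑ i ∈ t, h i) (Sum.inl c)) =
      ∑ i ∈ t, B *ᵥ fun c => h i (Sum.inl c) := by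
  rw [← Matrix.mulVec_sum]
  congr 1
  funext c
  simp only [Finset.sum_apply]

lemma tierZero_const {B : Matrix (Fin 1) (Fin tB) ℤ} {x : Fin tB ⊕ Fin n × Fin tA → ℤ}
    (h : (B *ᵥ fun c => x (Sum.inl c)) 0 = 0) : TierZero (fun _ => B) x :=
  fun _ => funext fun r => by rwa [Fin.fin_one_eq_zero r]

lemma tierOne_const {B : Matrix (Fin 1) (Fin tB) ℤ} {q : Fin 1 → ℤ}
    {x : Fin tB ⊕ Fin n × Fin tA → ℤ} (h : (B *ᵥ fun c => x (Sum.inl c)) 0 = q 0) :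
    TierOne (fun _ => B) q x :=
  fun _ => funext fun r => by rwa [Fin.fin_one_eq_zero r]

/-- When `S = 0` every summand is tier-0, and the tier-1 value only has to be nonzero. -/
lemma tierZero_or_tierOne_of_eq_zero_or_eq_sign_mul {B : Matrix (Fin 1) (Fin tB) ℤ} {S L : ℤ}
    {x : Fin tB ⊕ Fin n × Fin tA → ℤ}
    (h : (B *ᵥ fun c => x (Sum.inl c)) 0 = 0 ∨ (B *ᵥ fun c => x (Sum.inl c)) 0 = S.sign * L) :
    TierZero (fun _ => B) x ∨
      TierOne (fun _ => B) (fun _ => if S = 0 then 1 else S.sign * L) x := by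
  rcases h with h0 | h1
  · exact Or.inl (tierZero_const h0)
  by_cases hS : S = 0
  · exact Or.inl (tierZero_const (by rw [h1, hS, Int.sign_zero, zero_mul]))
  · exact Or.inr (tierOne_const (by rw [h1, if_neg hS]))

lemma ite_sign_mul_ne_zero {S L : ℤ} (hL : L ≠ 0) :
    (fun _ : Fin 1 => if S = 0 then 1 else S.sign * L) ≠ 0 := fun h => by
  have := congrFun h 0
  by_cases hS : S = 0 <;> simp [hS, hL] at this

lemma abs_mulVec_inl_apply_le {m : Type*} {B : Matrix m (Fin tB) ℤ} {Δ G : ℕ}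
    (hB : ∀ r c, |B r c| ≤ (Δ : ℤ)) {x : Fin tB ⊕ Fin n × Fin tA → ℤ} (hx : linf x ≤ G)
    (r : m) : |(B *ᵥ fun c => x (Sum.inl c)) r| ≤ (Δ * tB * G : ℕ) := by
  have := abs_mulVec_apply_le (v := fun c => x (Sum.inl c)) hB
    (fun c => (Int.abs_eq_natAbs _).trans_le (Nat.cast_le.2 ((natAbs_le_linf _ _).trans hx))) r
  simpa using this

theorem exists_uniformDecomp_of_finpartition {m : ℕ} {B : Fin n → Matrix (Fin sA) (Fin tB) ℤ}
    {A : Fin n → Matrix (Fin sA) (Fin tA) ℤ} {g : Fin tB ⊕ Fin n × Fin tA → ℤ}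
    {h : Fin m → Fin tB ⊕ Fin n × Fin tA → ℤ} (hsum : ∑ i, h i = g)
    (hconf : ∀ i, Conf (h i) g) (hker : ∀ i, Htwo B A *ᵥ h i = 0)
    (P : Finpartition (univ : Finset (Fin m))) {q : Fin sA → ℤ} (hq : q ≠ 0)
    (htier : ∀ t ∈ P.parts, TierZero B (∑ i ∈ t, h i) ∨ TierOne B q (∑ i ∈ t, h i)) :
    ∃ (N : ℕ) (η : Fin N → Fin tB ⊕ Fin n × Fin tA → ℤ),
      UniformDecomp B A g η q ∧ ∀ j, ∃ t ∈ P.parts, η j = ∑ i ∈ t, h i := by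
  let e := P.parts.equivFin
  refine ⟨P.parts.card, fun j => ∑ i ∈ (e.symm j : Finset (Fin m)), h i,
    ⟨hq, ?_, fun j => ⟨conf_sum_of_sum_eq hconf hsum _, ?_, htier _ (e.symm j).2⟩⟩,
    fun j => ⟨_, (e.symm j).2, rfl⟩⟩
  · calc g = ∑ i, h i := hsum.symm
      _ = ∑ t ∈ P.parts, ∑ i ∈ t, h i := (P.sum_sum_parts h).symm
      _ = _ := by rw [← sum_coe_sort P.parts, ← e.symm.sum_comp]
  · rw [Matrix.mulVec_sum]
    exact sum_eq_zero fun i _ => hker i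

end NFold

theorem stmt8_general (n tA tB sD Δ G : ℕ)
    (C : Matrix (Fin sD) (Fin tB) ℤ) (D : Fin n → Matrix (Fin sD) (Fin tA) ℤ)
    (B : Matrix (Fin 1) (Fin tB) ℤ) (A : Fin n → Matrix (Fin 1) (Fin tA) ℤ)
    (hB : ∀ r c, |B r c| ≤ (Δ : ℤ))
    (hGraver : ∀ y, IsGraver (Htwo (fun _ : Fin n => B) A) y → linf y ≤ G)
    (g : Fin tB ⊕ Fin n × Fin tA → ℤ)
    (hg : (H4 C D (fun _ => B) A).mulVec g = 0)
    (hmul : ((lamF (Δ * tB * G) : ℤ)) ∣ B.mulVec (fun c => g (Sum.inl c)) 0) :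
    ∃ (N : ℕ) (η : Fin N → Fin tB ⊕ Fin n × Fin tA → ℤ) (q : Fin 1 → ℤ),
      UniformDecomp (fun _ => B) A g η q ∧
      ∀ j, linf (η j) ≤ lamF (Δ * tB * G) * (6 * (Δ * tB * G) + 2) * G ∧
        (B.mulVec (fun c => η j (Sum.inl c)) 0 = 0 ∨
          B.mulVec (fun c => η j (Sum.inl c)) 0
            = (B.mulVec (fun c => g (Sum.inl c)) 0).sign * (lamF (Δ * tB * G) : ℤ)) := by
  set l0 := Δ * tB * G
  set S := B.mulVec (fun c => g (Sum.inl c)) 0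
  obtain ⟨m, h, hsum, hh⟩ := exists_sum_isGraver_conf _ (Htwo_mulVec_eq_zero_of_H4 hg)
  have hhG : ∀ i, linf (h i) ≤ G := fun i => hGraver _ (hh i).1
  have hblock : ∀ t : Finset (Fin m), (B *ᵥ fun c => (∑ i ∈ t, h i) (Sum.inl c)) 0
      = ∑ i ∈ t, (B *ᵥ fun c => h i (Sum.inl c)) 0 := fun t => by
    rw [mulVec_sum_inl, Finset.sum_apply]
  have hSsum : ∑ i, (B *ᵥ fun c => h i (Sum.inl c)) 0 = S := by rw [← hblock, hsum]
  obtain ⟨P, hP⟩ := exists_finpartition_sum_eq_zero_or_sign_mul (factorial_dvd_lamF l0)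
    (mul_factorial_lt_lamF l0) (fun i => abs_mulVec_inl_apply_le hB (hhG i) 0) univ
    (hSsum ▸ hmul)
  rw [hSsum] at hP
  obtain ⟨N, η, hU, hη⟩ := exists_uniformDecomp_of_finpartition hsum (fun i => (hh i).2)
    (fun i => (hh i).1.1) P
    (ite_sign_mul_ne_zero (S := S) (Nat.cast_ne_zero.2 (Nat.factorial_ne_zero _)))
    fun t ht => tierZero_or_tierOne_of_eq_zero_or_eq_sign_mul (by rw [hblock]; exact (hP t ht).2)
  refine ⟨N, η, _, hU, fun j => ?_⟩
  obtain ⟨t, ht, hηt⟩ := hη j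
  rw [hηt]
  refine ⟨(linf_sum_le_card_mul fun i _ => hhG i).trans ?_, by rw [hblock]; exact (hP t ht).2⟩
  calc t.card * G ≤ (2 * l0 + 1) * lamF l0 * G := Nat.mul_le_mul_right _ (hP t ht).1
    _ ≤ lamF l0 * (6 * l0 + 2) * G := by
        rw [mul_comm (2 * l0 + 1)]
        exact Nat.mul_le_mul_right _ (Nat.mul_le_mul_left _ (by omega))

/-- with `λ₀ = Δ·t_B·G` (where `G` bounds the ℓ∞-norm of the Graver elements
of the two-stage part) and `λ = (6λ₀²+2λ₀+1)!`, any `g ∈ ker_ℤ(H_com)` with `B g⁰` a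
multiple of `λ` admits a uniform decomposition whose summands `η_j` satisfy
`‖η_j‖∞ ≤ (6λ₀²+2λ₀+1)!·(6λ₀+2)·G` and `B η_j⁰ ∈ {0, sgn(B g⁰)·λ}`. -/
theorem stmt8 (n tA tB sD Δ G : ℕ) (hn : 1 ≤ n) (hΔ : 0 < Δ) (hG : 0 < G)
    (C : Matrix (Fin sD) (Fin tB) ℤ) (D : Fin n → Matrix (Fin sD) (Fin tA) ℤ)
    (B : Matrix (Fin 1) (Fin tB) ℤ) (A : Fin n → Matrix (Fin 1) (Fin tA) ℤ)
    (hC : ∀ r c, |C r c| ≤ (Δ : ℤ)) (hD : ∀ i r c, |D i r c| ≤ (Δ : ℤ))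
    (hB : ∀ r c, |B r c| ≤ (Δ : ℤ)) (hA : ∀ i r c, |A i r c| ≤ (Δ : ℤ))
    (hGraver : ∀ y, IsGraver (Htwo (fun _ : Fin n => B) A) y → linf y ≤ G)
    (g : Fin tB ⊕ Fin n × Fin tA → ℤ)
    (hg : (H4 C D (fun _ => B) A).mulVec g = 0)
    (hmul : ((lamF (Δ * tB * G) : ℤ)) ∣ B.mulVec (fun c => g (Sum.inl c)) 0) :
    ∃ (N : ℕ) (η : Fin N → Fin tB ⊕ Fin n × Fin tA → ℤ) (q : Fin 1 → ℤ),
      UniformDecomp (fun _ => B) A g η q ∧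
      ∀ j, linf (η j) ≤ lamF (Δ * tB * G) * (6 * (Δ * tB * G) + 2) * G ∧
        (B.mulVec (fun c => η j (Sum.inl c)) 0 = 0 ∨
          B.mulVec (fun c => η j (Sum.inl c)) 0
            = (B.mulVec (fun c => g (Sum.inl c)) 0).sign * (lamF (Δ * tB * G) : ℤ)) :=
  stmt8_general n tA tB sD Δ G C D B A hB hGraver g hg hmul
end

section
/- Let A be an M×d integer matrix, let λ, β ∈ ℤ_{>0}, and let g ∈ 𝒢(A) be a Graver basis element of A. Suppose λ·g = g₁ + ⋯ + g_p where each g_j ∈ ker_ℤ(A)\{0}, g_j ⊑ λ·g, and ‖g_j‖∞ ≤ β. Then p ≤ λ·d and ‖g‖∞ ≤ d·β. -/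
/-!
Run through the summands in order and, for each coordinate `k` with `g k ≠ 0`, count how many
multiples of `|g k|` the running sum `∑_{i < j} |g_i k|` has passed; sign compatibility makes the
final sum `λ |g k|`, so at most `λ` multiples are passed per coordinate. By minimality of `g`, each
`g_j` has a coordinate with `|g_j k| ≥ |g k| > 0` (otherwise `g_j ⊑ g`, so `g_j = g`), hence each
summand passes a new multiple and `p ≤ λ d`. Then `λ |g k| = ∑_j |g_j k| ≤ p β ≤ λ d β`.
-/

open Matrix

theorem le_sum_div_of_forall_exists_le {ι : Type*} [Fintype ι] {p : ℕ} (c : ι → ℕ)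
    (a : Fin p → ι → ℕ) (h : ∀ j, ∃ k, 0 < c k ∧ c k ≤ a j k) :
    p ≤ ∑ k, (∑ j, a j k) / c k := by
  induction p with
  | zero => exact Nat.zero_le _
  | succ p ih =>
    obtain ⟨k₀, hc₀, hle₀⟩ := h (Fin.last p)
    refine Nat.succ_le_of_lt ((ih (fun j => a j.castSucc) fun j => h _).trans_lt ?_)
    simp only [Fin.sum_univ_castSucc]
    refine Finset.sum_lt_sum (fun k _ => Nat.div_le_div_right (Nat.le_add_right _ _))
      ⟨k₀, Finset.mem_univ _, ?_⟩
    calc (∑ j : Fin p, a j.castSucc k₀) / c k₀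
        < (∑ j : Fin p, a j.castSucc k₀ + c k₀) / c k₀ := by
          rw [Nat.add_div_right _ hc₀]; exact Nat.lt_succ_self _
      _ ≤ _ := Nat.div_le_div_right (Nat.add_le_add_left hle₀ _)

theorem le_mul_card_of_sum_eq_mul {ι : Type*} [Fintype ι] {p m : ℕ} (c : ι → ℕ)
    (a : Fin p → ι → ℕ) (hsum : ∀ k, ∑ j, a j k = m * c k)
    (h : ∀ j, ∃ k, 0 < c k ∧ c k ≤ a j k) : p ≤ m * Fintype.card ι := by
  calc p ≤ ∑ k, (∑ j, a j k) / c k := le_sum_div_of_forall_exists_le c a h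
    _ ≤ ∑ _k : ι, m := Finset.sum_le_sum fun k _ => by
        rw [hsum]; exact Nat.div_le_of_le_mul (Nat.mul_comm _ _).le
    _ = m * Fintype.card ι := by simp [mul_comm]

theorem sum_natAbs_eq_natAbs_of_conf {ι κ : Type*} [Fintype ι] {x : ι → κ → ℤ} {y : κ → ℤ}
    (hx : ∀ j, Conf (x j) y) (hy : ∑ j, x j = y) (k : κ) :
    ∑ j, (x j k).natAbs = (y k).natAbs := by
  zify
  have hyk : ∑ j, x j k = y k := by rw [← hy, Finset.sum_apply]
  rcases eq_or_ne (y k) 0 with h0 | h0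
  · rw [h0, abs_zero]
    exact Finset.sum_eq_zero fun j _ => by simpa [h0] using (hx j k).2
  · refine mul_right_cancel₀ (abs_ne_zero.mpr h0) ?_
    calc (∑ j, |x j k|) * |y k| = ∑ j, x j k * y k := by
          rw [Finset.sum_mul]
          exact Finset.sum_congr rfl fun j _ => by rw [← abs_mul, abs_of_nonneg (hx j k).1]
      _ = |y k| * |y k| := by rw [← Finset.sum_mul, hyk, abs_mul_abs_self]

theorem IsGraver.exists_natAbs_le_of_conf_smul {R ι : Type*} [Fintype R] [Fintype ι]
    {A : Matrix R ι ℤ} {g : ι → ℤ} (hg : IsGraver A g) {c : ℤ} (hc : 0 < c) {y : ι → ℤ}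
    (hy : A *ᵥ y = 0) (hy0 : y ≠ 0) (hyc : Conf y (c • g)) :
    ∃ k, 0 < (g k).natAbs ∧ (g k).natAbs ≤ (y k).natAbs := by
  by_contra! hlt
  have hconf : Conf y g := fun k => by
    obtain ⟨hsign, habs⟩ := hyc k
    simp only [Pi.smul_apply, smul_eq_mul, abs_mul, abs_of_pos hc] at hsign habs
    refine ⟨nonneg_of_mul_nonneg_right (by linarith) hc, ?_⟩
    rcases eq_or_ne (g k) 0 with h0 | h0
    · simpa [h0] using habs
    · have := hlt k (Int.natAbs_pos.mpr h0)
      zify at this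
      exact this.le
  obtain ⟨k, hk⟩ := Function.ne_iff.mp hg.2.1
  have := hlt k (Int.natAbs_pos.mpr hk)
  rw [hg.2.2 y hy hy0 hconf] at this
  exact this.false

theorem stmt13_general (M d lam β p : ℕ) (hlam : 0 < lam)
    (A : Matrix (Fin M) (Fin d) ℤ) (g : Fin d → ℤ) (hg : IsGraver A g)
    (gs : Fin p → Fin d → ℤ)
    (hsum : (lam : ℤ) • g = ∑ j, gs j)
    (hker : ∀ j, A.mulVec (gs j) = 0)
    (hne : ∀ j, gs j ≠ 0)
    (hconf : ∀ j, Conf (gs j) ((lam : ℤ) • g))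
    (hbound : ∀ j, linf (gs j) ≤ β) :
    p ≤ lam * d ∧ linf g ≤ d * β := by
  have habs_sum (k : Fin d) : ∑ j, (gs j k).natAbs = lam * (g k).natAbs := by
    rw [sum_natAbs_eq_natAbs_of_conf hconf hsum.symm, Pi.smul_apply, smul_eq_mul,
      Int.natAbs_mul, Int.natAbs_natCast]
  have hp : p ≤ lam * d := by
    simpa using le_mul_card_of_sum_eq_mul _ _ habs_sum fun j =>
      hg.exists_natAbs_le_of_conf_smul (Int.natCast_pos.mpr hlam) (hker j) (hne j) (hconf j)
  refine ⟨hp, Finset.sup_le fun k _ => Nat.le_of_mul_le_mul_left ?_ hlam⟩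
  calc lam * (g k).natAbs = ∑ j, (gs j k).natAbs := (habs_sum k).symm
    _ ≤ ∑ _j : Fin p, β := Finset.sum_le_sum fun j _ =>
        (Finset.le_sup (f := fun k => (gs j k).natAbs) (Finset.mem_univ k)).trans (hbound j)
    _ = p * β := by simp
    _ ≤ lam * (d * β) := by rw [← mul_assoc]; exact Nat.mul_le_mul_right _ hp

/-- the counting argument. If `g` is a Graver basis element of `A` and
`λ·g = g₁ + ⋯ + g_p` with nonzero kernel elements `g_j ⊑ λ·g` of ℓ∞-norm at most `β`,
then `p ≤ λ·d` and `‖g‖∞ ≤ d·β`. -/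
theorem stmt13 (M d lam β p : ℕ) (hlam : 0 < lam) (hβ : 0 < β)
    (A : Matrix (Fin M) (Fin d) ℤ) (g : Fin d → ℤ) (hg : IsGraver A g)
    (gs : Fin p → Fin d → ℤ)
    (hsum : (lam : ℤ) • g = ∑ j, gs j)
    (hker : ∀ j, A.mulVec (gs j) = 0)
    (hne : ∀ j, gs j ≠ 0)
    (hconf : ∀ j, Conf (gs j) ((lam : ℤ) • g))
    (hbound : ∀ j, linf (gs j) ≤ β) :
    p ≤ lam * d ∧ linf g ≤ d * β :=
  stmt13_general M d lam β p hlam A g hg gs hsum hker hne hconf hbound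
end

section
/- Let t, σ, γ, N be positive integers, let S be a finite set with |S| = γ, and let CI ⊆ {1,…,t}. For each i ∈ S let g^i ∈ ℤ^t satisfy 1 ≤ |g^i[h]| ≤ σ for every h ∈ CI, and suppose g^i = Σ_{j=1}^N η_j^i where each η_j^i ∈ ℤ^t is sign-compatible with g^i (i.e., η_j^i[h]·g^i[h] ≥ 0 for every coordinate h). Call a pair (i,j) ∈ S×{1,…,N} bad if η_j^i[h] ≠ 0 for some h ∈ CI. Then for every partition of S×{1,…,N} into groups, the number of groups containing more than γ bad pairs is at most σ·|CI|. -/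
open Matrix

/-!
Sign-compatibility forbids cancellation: in a coordinate `h ∈ CI` the summands `η j i h` all
have the sign of `g i h`, so at most `|g i h| ≤ σ` of them are nonzero. Summing over `i ∈ S`
and `h ∈ CI` gives at most `γ σ |CI|` bad pairs, while each group with more than `γ` bad pairs
absorbs at least `γ + 1` of them; hence there are at most `σ |CI|` such groups.
-/

open Finset

section SignCompatible

variable {ι : Type*} [Fintype ι]

theorem card_filter_ne_zero_le_sum_natAbs (f : ι → ℤ) :
    #{j | f j ≠ 0} ≤ ∑ j, (f j).natAbs := by
  rw [card_filter]
  gcongr with j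
  split_ifs with hj
  · exact Int.natAbs_pos.2 hj
  · exact Nat.zero_le _

/-- Multiplying by `|c|` turns `|f j|` into `f j * c`, which is a plain sum. -/
theorem sum_natAbs_eq_natAbs_of_sign_compatible (f : ι → ℤ) {c : ℤ} (hc : c ≠ 0)
    (hsum : ∑ j, f j = c) (hsign : ∀ j, 0 ≤ f j * c) :
    ∑ j, (f j).natAbs = c.natAbs := by
  zify
  refine mul_right_cancel₀ (abs_ne_zero.2 hc) ?_
  calc (∑ j, |f j|) * |c| = ∑ j, f j * c := by
        rw [sum_mul]
        exact sum_congr rfl fun j _ => by rw [← abs_mul, abs_of_nonneg (hsign j)]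
    _ = |c| * |c| := by rw [← sum_mul, hsum, abs_mul_abs_self]

theorem card_filter_ne_zero_le_natAbs_of_sign_compatible (f : ι → ℤ) {c : ℤ} (hc : c ≠ 0)
    (hsum : ∑ j, f j = c) (hsign : ∀ j, 0 ≤ f j * c) :
    #{j | f j ≠ 0} ≤ c.natAbs :=
  (card_filter_ne_zero_le_sum_natAbs f).trans_eq
    (sum_natAbs_eq_natAbs_of_sign_compatible f hc hsum hsign)

end SignCompatible

theorem succ_mul_card_filter_lt_card_fiber_le {α β : Type*} [Fintype α] [Fintype β]
    [DecidableEq β] (f : α → β) (P : α → Prop) [DecidablePred P] (k : ℕ) :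
    (k + 1) * #{b | k < #{a | f a = b ∧ P a}} ≤ #{a | P a} := by
  have hfiber (b : β) : #{a | f a = b ∧ P a} = #{a ∈ {a | P a} | f a = b} := by
    rw [filter_filter]; simp only [and_comm]
  calc (k + 1) * #{b | k < #{a | f a = b ∧ P a}}
      = ∑ b ∈ {b | k < #{a | f a = b ∧ P a}}, (k + 1) := by
        rw [sum_const, smul_eq_mul, mul_comm]
    _ ≤ ∑ b ∈ {b | k < #{a | f a = b ∧ P a}}, #{a | f a = b ∧ P a} :=
        sum_le_sum fun b hb => (mem_filter.1 hb).2
    _ ≤ ∑ b, #{a | f a = b ∧ P a} := sum_le_sum_of_subset (subset_univ _)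
    _ = #{a | P a} := by
        simp only [hfiber]
        exact (card_eq_sum_card_fiberwise fun a _ => mem_univ (f a)).symm

theorem card_filter_exists_le_sum {α κ : Type*} [Fintype α] (s : Finset κ)
    (P : κ → α → Prop)
    [∀ h, DecidablePred (P h)] [DecidablePred fun a => ∃ h ∈ s, P h a] :
    #{a | ∃ h ∈ s, P h a} ≤ ∑ h ∈ s, #{a | P h a} := by
  classical
  calc #{a | ∃ h ∈ s, P h a} ≤ #(s.biUnion fun h => {a | P h a}) :=
        card_le_card fun a ha => by
          obtain ⟨h, hs, hP⟩ := (mem_filter.1 ha).2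
          exact mem_biUnion.2 ⟨h, hs, mem_filter.2 ⟨mem_univ a, hP⟩⟩
    _ ≤ ∑ h ∈ s, #{a | P h a} := card_biUnion_le

theorem card_filter_ne_zero_at_le_card_mul {S ι κ : Type*} [Fintype S] [Fintype ι] {σ : ℕ}
    (g : S → κ → ℤ) (η : ι → S → κ → ℤ) (hsum : ∀ i, g i = ∑ j, η j i)
    (hsign : ∀ j i h, 0 ≤ η j i h * g i h) {h : κ}
    (hg : ∀ i, g i h ≠ 0 ∧ |g i h| ≤ (σ : ℤ)) :
    #{p : S × ι | η p.2 p.1 h ≠ 0} ≤ Fintype.card S * σ := by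
  have hrow (i : S) : #{j | η j i h ≠ 0} ≤ σ := by
    have hsum_h : ∑ j, η j i h = g i h := by simp [hsum i]
    have := card_filter_ne_zero_le_natAbs_of_sign_compatible (fun j => η j i h) (hg i).1
      hsum_h fun j => hsign j i h
    have hg_natAbs : (g i h).natAbs ≤ σ := by
      have := (hg i).2
      rw [Int.abs_eq_natAbs] at this
      exact_mod_cast this
    omega
  calc #{p : S × ι | η p.2 p.1 h ≠ 0} = ∑ i, #{j | η j i h ≠ 0} := by
        simp only [card_filter, Fintype.sum_prod_type]
    _ ≤ ∑ _i : S, σ := sum_le_sum fun i _ => hrow i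
    _ = Fintype.card S * σ := by rw [sum_const, smul_eq_mul, card_univ]

theorem stmt14_general (t σ γ N : ℕ)
    (S : Type) [Fintype S] (hS : Fintype.card S = γ)
    (CI : Finset (Fin t))
    (g : S → Fin t → ℤ) (η : Fin N → S → Fin t → ℤ)
    (hg : ∀ i, ∀ h ∈ CI, 1 ≤ |g i h| ∧ |g i h| ≤ (σ : ℤ))
    (hsum : ∀ i, g i = ∑ j, η j i)
    (hsign : ∀ j i h, 0 ≤ η j i h * g i h)
    (G : ℕ) (part : S × Fin N → Fin G) :
    ((Finset.univ : Finset (Fin G)).filter fun b =>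
        γ < (Finset.univ.filter fun p : S × Fin N =>
              part p = b ∧ ∃ h ∈ CI, η p.2 p.1 h ≠ 0).card).card
      ≤ σ * CI.card := by
  have hbad : #{p : S × Fin N | ∃ h ∈ CI, η p.2 p.1 h ≠ 0} ≤ CI.card * (γ * σ) := by
    calc #{p : S × Fin N | ∃ h ∈ CI, η p.2 p.1 h ≠ 0}
        ≤ ∑ h ∈ CI, #{p : S × Fin N | η p.2 p.1 h ≠ 0} := card_filter_exists_le_sum _ _
      _ ≤ ∑ _h ∈ CI, γ * σ := sum_le_sum fun h hh =>
          hS ▸ card_filter_ne_zero_at_le_card_mul g η hsum hsign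
            fun i => ⟨abs_pos.1 (hg i h hh).1, (hg i h hh).2⟩
      _ = CI.card * (γ * σ) := by rw [sum_const, smul_eq_mul]
  have hgroups := succ_mul_card_filter_lt_card_fiber_le part
    (fun p : S × Fin N => ∃ h ∈ CI, η p.2 p.1 h ≠ 0) γ
  refine Nat.le_of_mul_le_mul_left ?_ γ.succ_pos
  calc _ ≤ CI.card * (γ * σ) := hgroups.trans hbad
    _ ≤ (γ + 1) * (σ * CI.card) := by rw [mul_comm, mul_assoc]; gcongr; omega

/-- the bad-group counting claim. For every partition (group labelling) of
`S × {1,…,N}`, the number of groups containing more than `γ = |S|` bad pairs is at most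
`σ·|CI|`. -/
theorem stmt14 (t σ γ N : ℕ) (ht : 0 < t) (hσ : 0 < σ) (hγ : 0 < γ) (hN : 0 < N)
    (S : Type) [Fintype S] [DecidableEq S] (hS : Fintype.card S = γ)
    (CI : Finset (Fin t))
    (g : S → Fin t → ℤ) (η : Fin N → S → Fin t → ℤ)
    (hg : ∀ i, ∀ h ∈ CI, 1 ≤ |g i h| ∧ |g i h| ≤ (σ : ℤ))
    (hsum : ∀ i, g i = ∑ j, η j i)
    (hsign : ∀ j i h, 0 ≤ η j i h * g i h)
    (G : ℕ) (part : S × Fin N → Fin G) :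
    ((Finset.univ : Finset (Fin G)).filter fun b =>
        γ < (Finset.univ.filter fun p : S × Fin N =>
              part p = b ∧ ∃ h ∈ CI, η p.2 p.1 h ≠ 0).card).card
      ≤ σ * CI.card :=
  stmt14_general t σ γ N S hS CI g η hg hsum hsign G part
end
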